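/- arXiv:2510.01525 — 9 statements merged into one kernel-verified Lean document; each statement's English description precedes it below -/
import Mathlib

section
/- For a single neuron with binary inputs: a pair (x, u) with x ∈ {0,1}^n and u ∈ {0,1} satisfies u = 1_{ℝ₊}(a(x)) if and only if it satisfies the two linear inequalities 2·Σ_{j=1}^n W_j x_j ≥ (R − LB + 1)·u + LB and 2·Σ_{j=1}^n W_j x_j ≤ (UB − R + 1)·u + (R − 1). -/
/-- Lemma 1 (hidden-layer case): for a single neuron with weights `W : Fin n → {-1,0,1}`,
bias `b : ℤ`, pre-activation `a(x) = ∑ W j (2 x j - 1) + b`, output `1_{ℝ₊}(a(x))`,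
and constants `LB, UB, R` as in the paper, a binary pair `(x, u)` satisfies
`u = 1_{ℝ₊}(a(x))` iff it satisfies the two big-M linear inequalities. -/
theorem stmt_0 (n : ℕ) (W : Fin n → ℝ) (b : ℤ)
    (hW : ∀ j, W j = -1 ∨ W j = 0 ∨ W j = 1)
    (LB UB R : ℝ)
    (hLB : LB = ∑ j, (W j - |W j|))
    (hUB : UB = ∑ j, (W j + |W j|))
    (hR : R = 2 * (⌈((∑ j, W j) - (b : ℝ)) / 2⌉ : ℝ) - 1)
    (x : Fin n → ℝ) (hx : ∀ j, x j = 0 ∨ x j = 1)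
    (u : ℝ) (hu : u = 0 ∨ u = 1) :
    (u = if 0 ≤ (∑ j, W j * (2 * x j - 1)) + (b : ℝ) then 1 else 0) ↔
      ((R - LB + 1) * u + LB ≤ 2 * ∑ j, W j * x j ∧
        2 * ∑ j, W j * x j ≤ (UB - R + 1) * u + (R - 1)) := by
  classical
  have hWk : ∀ j, ∃ k : ℤ, W j = (k : ℝ) := fun j => by
    rcases hW j with h | h | h
    · exact ⟨-1, by rw [h]; norm_num⟩
    · exact ⟨0, by rw [h]; norm_num⟩
    · exact ⟨1, by rw [h]; norm_num⟩
  have hSk : ∀ j, ∃ k : ℤ, W j * x j = (k : ℝ) := fun j => by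
    rcases hx j with h | h
    · exact ⟨0, by rw [h]; norm_num⟩
    · obtain ⟨k, hk⟩ := hWk j
      exact ⟨k, by rw [h, mul_one, hk]⟩
  choose W' hW' using hWk
  choose f hf using hSk
  set K : ℤ := ∑ j, f j with hK
  have hKS : (∑ j, W j * x j) = (K : ℝ) := by
    rw [hK]; push_cast
    exact Finset.sum_congr rfl fun j _ => hf j
  set C : ℤ := (∑ j, W' j) - b with hC
  have hsumW : (∑ j, W j) = ((∑ j, W' j : ℤ) : ℝ) := by
    push_cast; exact Finset.sum_congr rfl fun j _ => hW' j
  have hCR : (∑ j, W j) - (b : ℝ) = (C : ℝ) := by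
    rw [hC, hsumW]; push_cast; ring
  set m : ℤ := ⌈(C : ℝ) / 2⌉ with hm
  have hRm : R = 2 * (m : ℝ) - 1 := by rw [hR, hCR]
  have hceil : ∀ k : ℤ, ((C : ℝ) ≤ 2 * (k : ℝ) ↔ m ≤ k) := fun k => by
    rw [hm, Int.ceil_le, div_le_iff₀ (by norm_num : (0:ℝ) < 2)]
    constructor <;> intro h <;> linarith
  have ha : (∑ j, W j * (2 * x j - 1)) + (b : ℝ) = 2 * (K : ℝ) - (C : ℝ) := by
    have h1 : (∑ j, W j * (2 * x j - 1)) = 2 * (∑ j, W j * x j) - ∑ j, W j := by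
      rw [Finset.mul_sum, ← Finset.sum_sub_distrib]
      exact Finset.sum_congr rfl fun j _ => by ring
    rw [h1, hKS]; linarith [hCR]
  have hlow : LB ≤ 2 * (K : ℝ) := by
    rw [← hKS, hLB, show (2:ℝ) * ∑ j, W j * x j = ∑ j, 2 * (W j * x j) from by
      rw [Finset.mul_sum]]
    refine Finset.sum_le_sum fun j _ => ?_
    rcases hx j with h | h <;> rw [h] <;>
      simp only [mul_zero, mul_one] <;>
      cases abs_cases (W j) with
      | inl hc => linarith [hc.1, hc.2]
      | inr hc => linarith [hc.1, hc.2]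
  have hupp : 2 * (K : ℝ) ≤ UB := by
    rw [← hKS, hUB, show (2:ℝ) * ∑ j, W j * x j = ∑ j, 2 * (W j * x j) from by
      rw [Finset.mul_sum]]
    refine Finset.sum_le_sum fun j _ => ?_
    rcases hx j with h | h <;> rw [h] <;>
      simp only [mul_zero, mul_one] <;>
      cases abs_cases (W j) with
      | inl hc => linarith [hc.1, hc.2]
      | inr hc => linarith [hc.1, hc.2]
  rw [ha, hKS, hRm]
  rcases hu with hu0 | hu1
  · subst hu0
    split_ifs with h
    · have hmK : m ≤ K := (hceil K).mp (by linarith)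
      have hmK' : (m : ℝ) ≤ (K : ℝ) := by exact_mod_cast hmK
      constructor
      · intro h01; exact absurd h01 (by norm_num)
      · rintro ⟨h1, h2⟩; exfalso; nlinarith
    · have hKm : ¬ m ≤ K := fun hh => h (by
        have : (C : ℝ) ≤ 2 * (K : ℝ) := (hceil K).mpr hh
        linarith)
      have hKm' : K ≤ m - 1 := by omega
      have hKm'' : (K : ℝ) ≤ (m : ℝ) - 1 := by exact_mod_cast hKm'
      constructor
      · intro _; constructor <;> nlinarith
      · intro _; rfl
  · subst hu1
    split_ifs with h
    · constructor
      · intro _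
        have hmK : m ≤ K := (hceil K).mp (by linarith)
        have hmK' : (m : ℝ) ≤ (K : ℝ) := by exact_mod_cast hmK
        constructor <;> nlinarith
      · intro _; rfl
    · have hKm : ¬ m ≤ K := fun hh => h (by
        have : (C : ℝ) ≤ 2 * (K : ℝ) := (hceil K).mpr hh
        linarith)
      have hKm' : K ≤ m - 1 := by omega
      have hKm'' : (K : ℝ) ≤ (m : ℝ) - 1 := by exact_mod_cast hKm'
      constructor
      · intro h10; exact absurd h10 (by norm_num)
      · rintro ⟨h1, h2⟩; exfalso; nlinarith
end

section
/- For a first-layer neuron with quantized inputs: a pair (x, u) with x ∈ (1/q)ℤ₊^n ∩ [0,1]^n and u ∈ {0,1} satisfies u = 1_{ℝ₊}(a(x)) if and only if it satisfies the two linear inequalities 2·Σ_{j=1}^n W_j x_j ≥ (R − LB + 1/q)·u + LB and 2·Σ_{j=1}^n W_j x_j ≤ (UB − R + 1/q)·u + (R − 1/q). -/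
/-- Lemma 1 (first-layer case): for a single neuron with weights `W : Fin n → {-1,0,1}`,
bias `b : ℤ`, pre-activation `a(x) = ∑ W j (2 x j - 1) + b`, output `1_{ℝ₊}(a(x))`,
and constants `LB, UB, R` as in the paper, a pair `(x, u)` with quantized
`x ∈ (1/q)ℤ₊^n ∩ [0,1]^n` and binary `u` satisfies `u = 1_{ℝ₊}(a(x))` iff it satisfies
the two big-M linear inequalities. -/
theorem stmt_1 (n : ℕ) (q : ℕ) (hq : 1 ≤ q) (W : Fin n → ℝ) (b : ℤ)
    (hW : ∀ j, W j = -1 ∨ W j = 0 ∨ W j = 1)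
    (LB UB R : ℝ)
    (hLB : LB = ∑ j, (W j - |W j|))
    (hUB : UB = ∑ j, (W j + |W j|))
    (hR : R = (2 / (q : ℝ)) * (⌈((q : ℝ) * ((∑ j, W j) - (b : ℝ))) / 2⌉ : ℝ) - 1 / (q : ℝ))
    (x : Fin n → ℝ)
    (hx1 : ∀ j, ∃ m : ℕ, x j = (m : ℝ) / (q : ℝ))
    (hx2 : ∀ j, 0 ≤ x j ∧ x j ≤ 1)
    (u : ℝ) (hu : u = 0 ∨ u = 1) :
    (u = if 0 ≤ (∑ j, W j * (2 * x j - 1)) + (b : ℝ) then 1 else 0) ↔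
      ((R - LB + 1 / (q : ℝ)) * u + LB ≤ 2 * ∑ j, W j * x j ∧
        2 * ∑ j, W j * x j ≤ (UB - R + 1 / (q : ℝ)) * u + (R - 1 / (q : ℝ))) := by
  have hq0 : (0:ℝ) < q := by exact_mod_cast hq
  have hqne : (q:ℝ) ≠ 0 := ne_of_gt hq0
  set S := ∑ j, W j * x j with hS
  set T := (∑ j, W j) - (b:ℝ) with hT
  set C := ⌈((q : ℝ) * T) / 2⌉ with hC
  -- a(x) rewritten
  have ha : (∑ j, W j * (2 * x j - 1)) + (b : ℝ) = 2*S - T := by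
    have hsum : ∑ j, W j * (2 * x j - 1) = 2*S - ∑ j, W j := by
      rw [hS, Finset.mul_sum, ← Finset.sum_sub_distrib]
      exact Finset.sum_congr rfl (fun j _ => by ring)
    rw [hsum, hT]; ring
  -- q*S is an integer
  have hkex : ∀ j, ∃ kj : ℤ, (q:ℝ) * (W j * x j) = kj := by
    intro j
    obtain ⟨m, hm⟩ := hx1 j
    rcases hW j with h | h | h
    · exact ⟨-m, by rw [h, hm]; push_cast; field_simp; try ring⟩
    · exact ⟨0, by rw [h]; simp⟩
    · exact ⟨m, by rw [h, hm]; push_cast; field_simp; try ring⟩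
  choose kf hkf using hkex
  set k := ∑ j, kf j with hkdef
  have hk : (q:ℝ) * S = k := by
    rw [hS, Finset.mul_sum, hkdef]
    push_cast
    exact Finset.sum_congr rfl (fun j _ => hkf j)
  have h3 : 2*S = 2*(k:ℝ)/(q:ℝ) := by field_simp; linarith [hk]
  -- bounds
  have hLB' : LB ≤ 2 * S := by
    rw [hLB, hS, Finset.mul_sum]
    apply Finset.sum_le_sum
    intro j _
    obtain ⟨h1, h2⟩ := hx2 j
    rcases hW j with h | h | h <;> rw [h] <;>
      simp [abs_of_nonneg, abs_of_nonpos] <;> nlinarith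
  have hUB' : 2 * S ≤ UB := by
    rw [hUB, hS, Finset.mul_sum]
    apply Finset.sum_le_sum
    intro j _
    obtain ⟨h1, h2⟩ := hx2 j
    rcases hW j with h | h | h <;> rw [h] <;>
      simp [abs_of_nonneg, abs_of_nonpos] <;> nlinarith
  -- ceiling characterization
  have hdiv : ∀ a c : ℝ, a/(q:ℝ) ≤ c/(q:ℝ) ↔ a ≤ c := by
    intro a c
    rw [div_le_div_iff₀ hq0 hq0]
    constructor <;> intro h <;> nlinarith
  have hCk : (C ≤ k) ↔ ((q:ℝ) * T / 2 ≤ (k:ℝ)) := by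
    rw [hC]; exact Int.ceil_le
  have key : (T ≤ 2*S) ↔ ((C:ℝ) ≤ (k:ℝ)) := by
    rw [show ((C:ℝ) ≤ (k:ℝ)) ↔ (C ≤ k) from by exact_mod_cast Iff.rfl, hCk]
    constructor <;> intro h <;> nlinarith [hk]
  have hRm : R - 1/(q:ℝ) = (2*(C:ℝ) - 2)/(q:ℝ) := by rw [hR]; ring
  have hRp : R + 1/(q:ℝ) = (2*(C:ℝ))/(q:ℝ) := by rw [hR]; ring
  have keyR : (T ≤ 2*S) ↔ (R + 1/(q:ℝ) ≤ 2*S) := by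
    rw [key, hRp, h3, show (2*(C:ℝ)) = (2*(C:ℝ)*1) from by ring, show (2*(k:ℝ)) = (2*(k:ℝ)*1) from by ring]
    rw [hdiv]
    constructor <;> intro h <;> linarith
  have key2 : ¬(T ≤ 2*S) ↔ (2*S ≤ R - 1/(q:ℝ)) := by
    rw [key, hRm, h3, hdiv]
    constructor
    · intro h
      have hlt : k < C := by exact_mod_cast not_le.mp h
      have hle : k + 1 ≤ C := hlt
      have : (k:ℝ) + 1 ≤ (C:ℝ) := by exact_mod_cast hle
      linarith
    · intro h
      have : (k:ℝ) ≤ (C:ℝ) - 1 := by linarith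
      have hk1 : k ≤ C - 1 := by exact_mod_cast this
      push_neg
      exact_mod_cast (by omega : k < C)
  rw [ha]
  rcases hu with h0 | h1
  · subst h0
    constructor
    · intro h
      split_ifs at h with hcond
      · exact absurd h (by norm_num)
      · have hnt : ¬ (T ≤ 2*S) := fun hh => hcond (by linarith)
        exact ⟨by linarith [hLB'], by linarith [key2.mp hnt]⟩
    · rintro ⟨ha1, ha2⟩
      have hnt := key2.mpr (by linarith : 2*S ≤ R - 1/(q:ℝ))
      rw [if_neg (fun hc => hnt (by linarith))]
  · subst h1
    constructor
    · intro h
      split_ifs at h with hcond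
      · have hT2S : T ≤ 2*S := by linarith
        have hr := keyR.mp hT2S
        exact ⟨by linarith, by linarith [hUB']⟩
      · norm_num at h
    · rintro ⟨ha1, ha2⟩
      have h2 : R + 1/(q:ℝ) ≤ 2*S := by linarith
      have := keyR.mpr h2
      rw [if_pos (by linarith)]
end

section
/- For a single neuron with binary inputs and any c ∈ {−1,1}: a vector x ∈ {0,1}^n satisfies c·Σ_{j=1}^n W_j x_j ≤ c·R/2 if and only if 1_{ℝ₊}(a(x)) = (1 − c)/2. -/
/-- Lemma 3 (hidden-layer case): for a single neuron with weights `W : Fin n → {-1,0,1}`,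
bias `b : ℤ`, pre-activation `a(x) = ∑ W j (2 x j - 1) + b`, output `1_{ℝ₊}(a(x))`,
constant `R` as in the paper, and `c ∈ {-1,1}`, a binary vector `x` satisfies
`c·∑ W j x j ≤ c·R/2` iff `1_{ℝ₊}(a(x)) = (1-c)/2`. -/
theorem stmt_2 (n : ℕ) (W : Fin n → ℝ) (b : ℤ)
    (hW : ∀ j, W j = -1 ∨ W j = 0 ∨ W j = 1)
    (R : ℝ)
    (hR : R = 2 * (⌈((∑ j, W j) - (b : ℝ)) / 2⌉ : ℝ) - 1)
    (c : ℝ) (hc : c = -1 ∨ c = 1)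
    (x : Fin n → ℝ) (hx : ∀ j, x j = 0 ∨ x j = 1) :
    (c * ∑ j, W j * x j ≤ c * R / 2) ↔
      ((if 0 ≤ (∑ j, W j * (2 * x j - 1)) + (b : ℝ) then (1 : ℝ) else 0) = (1 - c) / 2) := by
  classical
  have hterm : ∀ j, ∃ k : ℤ, W j * x j = (k : ℝ) := by
    intro j
    rcases hW j with h | h | h <;> rcases hx j with h' | h'
    · exact ⟨0, by rw [h, h']; norm_num⟩
    · exact ⟨-1, by rw [h, h']; norm_num⟩
    · exact ⟨0, by rw [h, h']; norm_num⟩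
    · exact ⟨0, by rw [h, h']; norm_num⟩
    · exact ⟨0, by rw [h, h']; norm_num⟩
    · exact ⟨1, by rw [h, h']; norm_num⟩
  choose g hg using hterm
  have hwterm : ∀ j, ∃ k : ℤ, W j = (k : ℝ) := by
    intro j
    rcases hW j with h | h | h <;> rw [h]
    · exact ⟨-1, by norm_num⟩
    · exact ⟨0, by norm_num⟩
    · exact ⟨1, by norm_num⟩
  choose w hw using hwterm
  set s : ℤ := ∑ j, g j with hs
  set t : ℤ := ∑ j, w j with ht
  have hseq : ∑ j, W j * x j = (s : ℝ) := by
    rw [hs]; push_cast; exact Finset.sum_congr rfl fun j _ => hg j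
  have hteq : ∑ j, W j = (t : ℝ) := by
    rw [ht]; push_cast; exact Finset.sum_congr rfl fun j _ => hw j
  have ha : (∑ j, W j * (2 * x j - 1)) + (b : ℝ) = 2 * (s : ℝ) - t + b := by
    have : ∀ j ∈ Finset.univ, W j * (2 * x j - 1) = 2 * (W j * x j) - W j :=
      fun j _ => by ring
    rw [Finset.sum_congr rfl this, Finset.sum_sub_distrib, ← Finset.mul_sum, hseq, hteq]
  set m : ℤ := ⌈((t : ℝ) - (b : ℝ)) / 2⌉ with hm
  have hRm : R = 2 * (m : ℝ) - 1 := by rw [hR, hteq]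
  have hkey : (0 ≤ (∑ j, W j * (2 * x j - 1)) + (b : ℝ)) ↔ m ≤ s := by
    rw [ha, hm, Int.ceil_le]
    constructor
    · intro h; linarith
    · intro h; linarith
  rcases hc with rfl | rfl
  · -- c = -1
    rw [hRm]
    norm_num
    rw [hkey, hseq]
    constructor
    · intro h
      have hms : m ≤ s := by
        have : (m : ℝ) - 1/2 ≤ (s : ℝ) := by linarith
        by_contra hns
        push_neg at hns
        have : (s : ℝ) ≤ (m : ℝ) - 1 := by exact_mod_cast Int.le_sub_one_of_lt hns
        linarith
      simp [hms]
    · intro h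
      by_cases hms : m ≤ s
      · have : (m : ℝ) ≤ (s : ℝ) := by exact_mod_cast hms
        linarith
      · simp [hms] at h
  · -- c = 1
    rw [hRm, hseq]
    norm_num
    rw [← not_le, hkey]
    constructor
    · intro h
      have : (s : ℝ) < (m : ℝ) := by linarith
      have hsm : s < m := by exact_mod_cast this
      omega
    · intro h
      have hsm : s < m := by omega
      have : (s : ℝ) ≤ (m : ℝ) - 1 := by exact_mod_cast Int.le_sub_one_of_lt hsm
      linarith
end

section
/- Two-variable valid inequality for a hidden layer: let X ⊆ Y ⊆ {0,1}^n and c_i, c_k ∈ {−1,1}. If every y ∈ Y satisfying c_k·Σ_{j=1}^n W^k_j y_j ≥ c_k·R_k/2 also satisfies c_i·Σ_{j=1}^n W^i_j y_j ≤ c_i·R_i/2, then every x ∈ X satisfies c_i·1_{ℝ₊}(a_i(x)) + c_k·1_{ℝ₊}(a_k(x)) ≤ (c_i + c_k)/2. -/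
/-- Helper: integer witnesses for the relevant sums of a neuron with
ternary weights on binary inputs. -/
lemma stmt_6_key (n : ℕ) (W : Fin n → ℝ)
    (hW : ∀ j, W j = -1 ∨ W j = 0 ∨ W j = 1)
    (x : Fin n → ℝ) (hx : ∀ j, x j = 0 ∨ x j = 1) :
    ∃ s t : ℤ, (s : ℝ) = ∑ j, W j * x j ∧ (t : ℝ) = ∑ j, W j ∧
      (∑ j, W j * (2 * x j - 1)) = 2 * (s : ℝ) - (t : ℝ) := by
  have h1 : ∀ j, ∃ m : ℤ, W j * x j = (m : ℝ) := by
    intro j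
    rcases hW j with h | h | h <;> rcases hx j with h2 | h2 <;>
      [exact ⟨0, by rw [h, h2]; norm_num⟩; exact ⟨-1, by rw [h, h2]; norm_num⟩;
       exact ⟨0, by rw [h, h2]; norm_num⟩; exact ⟨0, by rw [h, h2]; norm_num⟩;
       exact ⟨0, by rw [h, h2]; norm_num⟩; exact ⟨1, by rw [h, h2]; norm_num⟩]
  have h2 : ∀ j, ∃ m : ℤ, W j = (m : ℝ) := by
    intro j
    rcases hW j with h | h | h
    · exact ⟨-1, by rw [h]; norm_num⟩
    · exact ⟨0, by rw [h]; norm_num⟩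
    · exact ⟨1, by rw [h]; norm_num⟩
  choose f hf using h1
  choose g hg using h2
  refine ⟨∑ j, f j, ∑ j, g j, ?_, ?_, ?_⟩
  · push_cast
    exact Finset.sum_congr rfl fun j _ => (hf j).symm
  · push_cast
    exact Finset.sum_congr rfl fun j _ => (hg j).symm
  · push_cast
    rw [show (2 : ℝ) * (∑ j, (f j : ℝ)) - ∑ j, (g j : ℝ)
        = ∑ j, (2 * (f j : ℝ) - (g j : ℝ)) by
      rw [Finset.mul_sum, Finset.sum_sub_distrib]]
    exact Finset.sum_congr rfl fun j _ => by rw [← hf j, ← hg j]; ring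

/-- Theorem 4 (two-variable inequality, hidden-layer case): for two neurons `i, k`
sharing binary inputs, if `X ⊆ Y ⊆ {0,1}^n` and every `y ∈ Y` with
`c_k·∑ W^k j y j ≥ c_k·R_k/2` also satisfies `c_i·∑ W^i j y j ≤ c_i·R_i/2`, then every
`x ∈ X` satisfies `c_i·1_{ℝ₊}(a_i(x)) + c_k·1_{ℝ₊}(a_k(x)) ≤ (c_i + c_k)/2`. -/
theorem stmt_6 (n : ℕ) (Wi Wk : Fin n → ℝ) (bi bk : ℤ)
    (hWi : ∀ j, Wi j = -1 ∨ Wi j = 0 ∨ Wi j = 1)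
    (hWk : ∀ j, Wk j = -1 ∨ Wk j = 0 ∨ Wk j = 1)
    (Ri Rk : ℝ)
    (hRi : Ri = 2 * (⌈((∑ j, Wi j) - (bi : ℝ)) / 2⌉ : ℝ) - 1)
    (hRk : Rk = 2 * (⌈((∑ j, Wk j) - (bk : ℝ)) / 2⌉ : ℝ) - 1)
    (ci ck : ℝ) (hci : ci = -1 ∨ ci = 1) (hck : ck = -1 ∨ ck = 1)
    (X Y : Set (Fin n → ℝ))
    (hXY : X ⊆ Y)
    (hYbin : ∀ y ∈ Y, ∀ j, y j = 0 ∨ y j = 1)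
    (hval : ∀ y ∈ Y, ck * Rk / 2 ≤ ck * ∑ j, Wk j * y j →
      ci * ∑ j, Wi j * y j ≤ ci * Ri / 2) :
    ∀ x ∈ X,
      ci * (if 0 ≤ (∑ j, Wi j * (2 * x j - 1)) + (bi : ℝ) then (1 : ℝ) else 0) +
        ck * (if 0 ≤ (∑ j, Wk j * (2 * x j - 1)) + (bk : ℝ) then (1 : ℝ) else 0) ≤
          (ci + ck) / 2 := by
  intro x hxX
  have hxY := hXY hxX
  have hx := hYbin x hxY
  obtain ⟨si, ti, hsi, hti, hsumi⟩ := stmt_6_key n Wi hWi x hx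
  obtain ⟨sk, tk, hsk, htk, hsumk⟩ := stmt_6_key n Wk hWk x hx
  set Ci : ℤ := ⌈((ti : ℝ) - (bi : ℝ)) / 2⌉ with hCi
  set Ck : ℤ := ⌈((tk : ℝ) - (bk : ℝ)) / 2⌉ with hCk
  have hRi' : Ri = 2 * (Ci : ℝ) - 1 := by rw [hRi, ← hti]
  have hRk' : Rk = 2 * (Ck : ℝ) - 1 := by rw [hRk, ← htk]
  have hacti : (0 ≤ (∑ j, Wi j * (2 * x j - 1)) + (bi : ℝ)) ↔ Ci ≤ si := by
    rw [hsumi, show (Ci ≤ si) ↔ (((ti : ℝ) - (bi : ℝ)) / 2 ≤ (si : ℝ)) from by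
      rw [hCi]; exact Int.ceil_le]
    constructor <;> intro h <;> linarith
  have hactk : (0 ≤ (∑ j, Wk j * (2 * x j - 1)) + (bk : ℝ)) ↔ Ck ≤ sk := by
    rw [hsumk, show (Ck ≤ sk) ↔ (((tk : ℝ) - (bk : ℝ)) / 2 ≤ (sk : ℝ)) from by
      rw [hCk]; exact Int.ceil_le]
    constructor <;> intro h <;> linarith
  rcases hci with rfl | rfl <;> rcases hck with rfl | rfl <;>
    split_ifs with hA hB hB <;> try norm_num
  -- Case ci = -1, ck = -1, both inactive (the bad case for this sign pattern)
  · exfalso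
    have hk1 : ¬ Ck ≤ sk := fun h => hB (hactk.mpr h)
    have hk2 : (sk : ℝ) ≤ (Ck : ℝ) - 1 := by
      have : sk ≤ Ck - 1 := by omega
      exact_mod_cast this
    have hcon := hval x hxY (by rw [hRk', ← hsk]; linarith)
    rw [hRi', ← hsi] at hcon
    have hi1 : (Ci : ℝ) ≤ (si : ℝ) + 1/2 := by linarith
    have hi2 : Ci ≤ si := by
      have : (Ci : ℝ) < (si : ℝ) + 1 := by linarith
      have : Ci < si + 1 := by exact_mod_cast this
      omega
    exact hA (hacti.mpr hi2)
  -- Case ci = -1, ck = 1, Ii = 0, Ik = 1 (bad case)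
  · exfalso
    have hk1 : Ck ≤ sk := hactk.mp hB
    have hk2 : (Ck : ℝ) ≤ (sk : ℝ) := by exact_mod_cast hk1
    have hcon := hval x hxY (by rw [hRk', ← hsk]; linarith)
    rw [hRi', ← hsi] at hcon
    have hi2 : Ci ≤ si := by
      have : (Ci : ℝ) < (si : ℝ) + 1 := by linarith
      have : Ci < si + 1 := by exact_mod_cast this
      omega
    exact hA (hacti.mpr hi2)
  -- Case ci = 1, ck = -1, Ii = 1, Ik = 0 (bad case)
  · exfalso
    have hk1 : ¬ Ck ≤ sk := fun h => hB (hactk.mpr h)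
    have hk2 : (sk : ℝ) ≤ (Ck : ℝ) - 1 := by
      have : sk ≤ Ck - 1 := by omega
      exact_mod_cast this
    have hcon := hval x hxY (by rw [hRk', ← hsk]; linarith)
    rw [hRi', ← hsi] at hcon
    have hi1 : Ci ≤ si := hacti.mp hA
    have hi2 : (Ci : ℝ) ≤ (si : ℝ) := by exact_mod_cast hi1
    linarith
  -- Case ci = 1, ck = 1, both active (bad case)
  · exfalso
    have hk1 : Ck ≤ sk := hactk.mp hB
    have hk2 : (Ck : ℝ) ≤ (sk : ℝ) := by exact_mod_cast hk1
    have hcon := hval x hxY (by rw [hRk', ← hsk]; linarith)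
    rw [hRi', ← hsi] at hcon
    have hi1 : Ci ≤ si := hacti.mp hA
    have hi2 : (Ci : ℝ) ≤ (si : ℝ) := by exact_mod_cast hi1
    linarith
end

section
/- Two-variable valid inequality for the first layer: let X ⊆ Y ⊆ (1/q)ℤ₊^n ∩ [0,1]^n and c_i, c_k ∈ {−1,1}. If every y ∈ Y satisfying c_k·Σ_{j=1}^n W^k_j y_j ≥ c_k·R_k/2 also satisfies c_i·Σ_{j=1}^n W^i_j y_j ≤ c_i·R_i/2, then every x ∈ X satisfies c_i·1_{ℝ₊}(a_i(x)) + c_k·1_{ℝ₊}(a_k(x)) ≤ (c_i + c_k)/2. -/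
lemma neuron_iff (n q : ℕ) (hq : 1 ≤ q) (W : Fin n → ℝ)
    (hW : ∀ j, W j = -1 ∨ W j = 0 ∨ W j = 1) (b : ℤ) (R : ℝ)
    (hR : R = (2 / (q : ℝ)) * (⌈((q : ℝ) * ((∑ j, W j) - (b : ℝ))) / 2⌉ : ℝ) - 1 / (q : ℝ))
    (x : Fin n → ℝ) (hx : ∀ j, ∃ m : ℕ, x j = (m : ℝ) / (q : ℝ)) :
    ((0 ≤ (∑ j, W j * (2 * x j - 1)) + (b : ℝ)) ↔ R / 2 ≤ ∑ j, W j * x j)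
    ∧ R / 2 ≠ ∑ j, W j * x j := by
  have hq0 : (0:ℝ) < q := by exact_mod_cast hq
  have hqne : (q:ℝ) ≠ 0 := ne_of_gt hq0
  have hz : ∀ j, ∃ z : ℤ, (z : ℝ) = (q : ℝ) * (W j * x j) := by
    intro j
    obtain ⟨m, hm⟩ := hx j
    rcases hW j with h | h | h
    · refine ⟨-m, ?_⟩; rw [hm, h]; push_cast; field_simp
    · exact ⟨0, by rw [h]; push_cast; ring⟩
    · refine ⟨m, ?_⟩; rw [hm, h]; push_cast; field_simp
  choose z hzz using hz
  obtain ⟨M, hM⟩ : ∃ M : ℤ, (M : ℝ) = (q : ℝ) * ∑ j, W j * x j := by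
    refine ⟨∑ j, z j, ?_⟩
    rw [Finset.mul_sum]
    push_cast
    exact Finset.sum_congr rfl fun j _ => hzz j
  set t : ℝ := ((q : ℝ) * ((∑ j, W j) - (b : ℝ))) / 2 with ht
  set S : ℝ := ∑ j, W j * x j with hS
  have hSM : S = (M : ℝ) / q := by rw [eq_div_iff hqne, hM]; ring
  have ha : (∑ j, W j * (2 * x j - 1)) = 2 * S - ∑ j, W j := by
    rw [hS, Finset.mul_sum, ← Finset.sum_sub_distrib]
    exact Finset.sum_congr rfl fun j _ => by ring
  have hceil : (⌈t⌉ ≤ M) ↔ t ≤ (M : ℝ) := Int.ceil_le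
  have hRS : R / 2 = ((⌈t⌉ : ℝ) - 1/2) / q := by rw [hR]; field_simp
  constructor
  · rw [ha, hRS, hSM, div_le_div_iff_of_pos_right hq0]
    constructor
    · intro h
      have h1 : t ≤ (M : ℝ) := by
        rw [ht, hM]; nlinarith
      have h2 : (⌈t⌉ : ℝ) ≤ (M : ℝ) := by exact_mod_cast hceil.mpr h1
      linarith
    · intro h
      have h2 : ⌈t⌉ ≤ M := by
        have : (⌈t⌉ : ℝ) < (M : ℝ) + 1 := by linarith
        exact_mod_cast Int.lt_add_one_iff.mp (by exact_mod_cast this)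
      have h3 : t ≤ (M : ℝ) := hceil.mp h2
      rw [ht, hM] at h3
      nlinarith
  · rw [hRS, hSM]
    intro h
    rw [div_eq_div_iff hqne hqne] at h
    have h' : (⌈t⌉ : ℝ) - 1/2 = M := by
      have := mul_right_cancel₀ hqne h
      linarith [this]
    have h2 : (2 * ⌈t⌉ : ℝ) = 2 * M + 1 := by linarith
    have : (2 * ⌈t⌉ : ℤ) = 2 * M + 1 := by exact_mod_cast h2
    omega

/-- Theorem 4 (two-variable inequality, first-layer case): for two neurons `i, k`
sharing quantized inputs, if `X ⊆ Y ⊆ (1/q)ℤ₊^n ∩ [0,1]^n` and every `y ∈ Y` with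
`c_k·∑ W^k j y j ≥ c_k·R_k/2` also satisfies `c_i·∑ W^i j y j ≤ c_i·R_i/2`, then every
`x ∈ X` satisfies `c_i·1_{ℝ₊}(a_i(x)) + c_k·1_{ℝ₊}(a_k(x)) ≤ (c_i + c_k)/2`. -/
theorem stmt_7 (n : ℕ) (q : ℕ) (hq : 1 ≤ q) (Wi Wk : Fin n → ℝ) (bi bk : ℤ)
    (hWi : ∀ j, Wi j = -1 ∨ Wi j = 0 ∨ Wi j = 1)
    (hWk : ∀ j, Wk j = -1 ∨ Wk j = 0 ∨ Wk j = 1)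
    (Ri Rk : ℝ)
    (hRi : Ri = (2 / (q : ℝ)) * (⌈((q : ℝ) * ((∑ j, Wi j) - (bi : ℝ))) / 2⌉ : ℝ) - 1 / (q : ℝ))
    (hRk : Rk = (2 / (q : ℝ)) * (⌈((q : ℝ) * ((∑ j, Wk j) - (bk : ℝ))) / 2⌉ : ℝ) - 1 / (q : ℝ))
    (ci ck : ℝ) (hci : ci = -1 ∨ ci = 1) (hck : ck = -1 ∨ ck = 1)
    (X Y : Set (Fin n → ℝ))
    (hXY : X ⊆ Y)
    (hYquant : ∀ y ∈ Y, (∀ j, ∃ m : ℕ, y j = (m : ℝ) / (q : ℝ)) ∧ ∀ j, 0 ≤ y j ∧ y j ≤ 1)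
    (hval : ∀ y ∈ Y, ck * Rk / 2 ≤ ck * ∑ j, Wk j * y j →
      ci * ∑ j, Wi j * y j ≤ ci * Ri / 2) :
    ∀ x ∈ X,
      ci * (if 0 ≤ (∑ j, Wi j * (2 * x j - 1)) + (bi : ℝ) then (1 : ℝ) else 0) +
        ck * (if 0 ≤ (∑ j, Wk j * (2 * x j - 1)) + (bk : ℝ) then (1 : ℝ) else 0) ≤
          (ci + ck) / 2 := by
  intro x hx
  have hxY : x ∈ Y := hXY hx
  have hquant := (hYquant x hxY).1
  obtain ⟨hiffI, hneI⟩ := neuron_iff n q hq Wi hWi bi Ri hRi x hquant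
  obtain ⟨hiffK, hneK⟩ := neuron_iff n q hq Wk hWk bk Rk hRk x hquant
  have hv := hval x hxY
  set Si : ℝ := ∑ j, Wi j * x j
  set Sk : ℝ := ∑ j, Wk j * x j
  have hKpos : ∀ h : 0 ≤ (∑ j, Wk j * (2 * x j - 1)) + (bk : ℝ), Rk / 2 ≤ Sk := fun h => hiffK.mp h
  have hKneg : ∀ h : ¬ 0 ≤ (∑ j, Wk j * (2 * x j - 1)) + (bk : ℝ), Sk < Rk / 2 := by
    intro h
    by_contra hc
    push_neg at hc
    exact h (hiffK.mpr hc)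
  rcases hci with rfl | rfl <;> rcases hck with rfl | rfl <;>
      split_ifs with h1 h2 h2 <;> simp only [mul_one, mul_zero] <;>
      try linarith
  -- ci = -1, ck = -1, ¬h1, ¬h2
  · exfalso
    have hk := hKneg h2
    have hv2 := hv (by linarith)
    exact h1 (hiffI.mpr (by linarith))
  -- ci = -1, ck = 1, ¬h1, h2
  · exfalso
    have hk := hKpos h2
    have hv2 := hv (by linarith)
    exact h1 (hiffI.mpr (by linarith))
  -- ci = 1, ck = -1, h1, ¬h2
  · exfalso
    have hk := hKneg h2
    have hv2 := hv (by linarith)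
    have hi := hiffI.mp h1
    exact hneI (by linarith)
  -- ci = 1, ck = 1, h1, h2
  · exfalso
    have hk := hKpos h2
    have hv2 := hv (by linarith)
    have hi := hiffI.mp h1
    exact hneI (by linarith)
end

section
/- Convex hull of a single binarized neuron: the convex hull in ℝ^n × ℝ of the set {(x, u) ∈ {0,1}^n × {0,1} : u = 1_{ℝ₊}(a(x))} equals the set of all (x, u) ∈ [0,1]^n × [0,1] that, for every subset J of {j ∈ {1,…,n} : W_j ≠ 0}, satisfy the two inequalities Σ_{j ∈ J}(W_j(2x_j − 1) − (2u − 1)) ≥ (R − UB + 1)·u and Σ_{j ∈ J}(W_j(2x_j − 1) − (2u − 1)) ≤ (R − LB − 1)·(1 − u). -/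
/-!
The inequalities are affine in `(x, u)` and hold at every point of the graph, which gives the
inclusion `⊆`. For the converse, orient every coordinate so that its weight is `+1`
(`z j = x j`, or `1 - x j` when `W j = -1`). For fixed `u ∈ (0, 1)` the strongest inequalities are
those for `J = {j | z j < u}` and `J = {j | z j > u}`, and they say exactly that the upper part
`z¹ = min 1 (z / u)` lies on the firing side of the neuron and the lower part
`z⁰ = max 0 (z - u) / (1 - u)` on the other side. Since `z = u • z¹ + (1 - u) • z⁰`, it remains to
see that the unit cube cut by one half-space `c ≤ W ⬝ᵥ x` (with `c` an integer and `W` ternary) is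
the convex hull of its binary points. By Krein–Milman it suffices that its extreme points are
binary: a point with two fractional coordinates can be moved both ways along a line in their plane
that keeps `W ⬝ᵥ x` fixed, and if only one coordinate is fractional, integrality of the other terms
keeps the whole edge of the cube through the point inside the half-space.
-/

open Finset Filter Topology Matrix

lemma mem_Icc_iff_forall {ι : Type*} {x : ι → ℝ} :
    x ∈ Set.Icc 0 1 ↔ ∀ j, 0 ≤ x j ∧ x j ≤ 1 := by
  rw [← Set.pi_univ_Icc, Set.mem_univ_pi]
  rfl

lemma notMem_extremePoints_of_eventually {E : Type*} [NormedAddCommGroup E] [NormedSpace ℝ E]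
    {A : Set E} {x v : E} (hv : v ≠ 0) (h : ∀ᶠ t in 𝓝 (0 : ℝ), x + t • v ∈ A) :
    x ∉ A.extremePoints ℝ := by
  intro hx
  obtain ⟨ε, hε, hball⟩ := Metric.eventually_nhds_iff.1 h
  have hmem : ∀ t : ℝ, |t| < ε → x + t • v ∈ A := fun t ht => hball (by simpa using ht)
  have hseg : x ∈ openSegment ℝ (x + (ε / 2) • v) (x + (-(ε / 2)) • v) :=
    ⟨1 / 2, 1 / 2, by norm_num, by norm_num, by norm_num, by module⟩
  have hfix := (mem_extremePoints.1 hx).2 _ (hmem _ (by rw [abs_of_pos (by positivity)]; linarith))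
    _ (hmem _ (by rw [abs_neg, abs_of_pos (by positivity)]; linarith)) hseg
  have h0 : (ε / 2) • v = 0 := by simpa using hfix.1
  exact hv ((smul_eq_zero.1 h0).resolve_left (by positivity))

lemma Convex.combo_mem_of_pos_of_lt_one {E : Type*} [AddCommGroup E] [Module ℝ E] {C : Set E}
    (hC : Convex ℝ C) {a b : E} {u : ℝ} (hu₀ : 0 ≤ u) (hu₁ : u ≤ 1) (ha : 0 < u → a ∈ C)
    (hb : u < 1 → b ∈ C) : u • a + (1 - u) • b ∈ C := by
  rcases hu₀.eq_or_lt with rfl | hu₀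
  · simpa using hb zero_lt_one
  rcases hu₁.eq_or_lt with rfl | hu₁
  · simpa using ha zero_lt_one
  exact hC (ha hu₀) (hb hu₁) hu₀.le (by linarith) (by ring)

lemma forall_subset_le_sum_iff {ι : Type*} {s : Finset ι} {a : ι → ℝ} {c : ℝ} :
    (∀ J ⊆ s, c ≤ ∑ j ∈ J, a j) ↔ c ≤ ∑ j ∈ s, min (a j) 0 := by
  classical
  refine ⟨fun h => ?_, fun h J hJ => ?_⟩
  · simpa [sum_filter, min_def] using h {j ∈ s | a j ≤ 0} (filter_subset _ _)
  · calc c ≤ ∑ j ∈ s, min (a j) 0 := h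
      _ ≤ ∑ j ∈ J, min (a j) 0 := sum_le_sum_of_subset_of_nonpos' hJ fun j _ _ => min_le_right _ _
      _ ≤ ∑ j ∈ J, a j := sum_le_sum fun j _ => min_le_left _ _

lemma forall_subset_sum_le_iff {ι : Type*} {s : Finset ι} {a : ι → ℝ} {c : ℝ} :
    (∀ J ⊆ s, ∑ j ∈ J, a j ≤ c) ↔ ∑ j ∈ s, max (a j) 0 ≤ c := by
  classical
  refine ⟨fun h => ?_, fun h J hJ => ?_⟩
  · simpa [sum_filter, max_def'] using h {j ∈ s | 0 ≤ a j} (filter_subset _ _)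
  · calc ∑ j ∈ J, a j ≤ ∑ j ∈ J, max (a j) 0 := sum_le_sum fun j _ => le_max_left _ _
      _ ≤ ∑ j ∈ s, max (a j) 0 := sum_le_sum_of_subset_of_nonneg hJ fun j _ _ => le_max_right _ _
      _ ≤ c := h

lemma int_le_add_mul_of_mem_Icc {w t s : ℝ} {c m : ℤ} (hw : w = -1 ∨ w = 0 ∨ w = 1)
    (ht : t ∈ Set.Ioo 0 1) (h : (c : ℝ) ≤ m + w * t) (hs : s ∈ Set.Icc 0 1) :
    (c : ℝ) ≤ m + w * s := by
  obtain ⟨ht₀, ht₁⟩ := ht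
  obtain ⟨hs₀, hs₁⟩ := hs
  rcases hw with rfl | rfl | rfl
  · have : c < m := by exact_mod_cast (show (c : ℝ) < m by linarith)
    have : (c : ℝ) ≤ m - 1 := by exact_mod_cast Int.le_sub_one_of_lt this
    linarith
  · simpa using h
  · have : c < m + 1 := by exact_mod_cast (show (c : ℝ) < m + 1 by linarith)
    have : (c : ℝ) ≤ m := by exact_mod_cast Int.lt_add_one_iff.1 this
    linarith

section Cube

variable {ι : Type*} [Fintype ι] {W : ι → ℝ}

lemma exists_int_dotProduct_eq (hW : ∀ j, W j = -1 ∨ W j = 0 ∨ W j = 1) {v : ι → ℝ}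
    (hv : ∀ j, v j = 0 ∨ v j = 1) : ∃ m : ℤ, W ⬝ᵥ v = m := by
  have hint : ∀ t : ℝ, t = -1 ∨ t = 0 ∨ t = 1 → t ∈ (Int.castRingHom ℝ).range := by
    rintro t (rfl | rfl | rfl)
    exacts [⟨-1, by simp⟩, ⟨0, by simp⟩, ⟨1, by simp⟩]
  obtain ⟨m, hm⟩ : W ⬝ᵥ v ∈ (Int.castRingHom ℝ).range :=
    Subring.sum_mem _ fun j _ => Subring.mul_mem _ (hint _ (hW j))
      (hint _ (by rcases hv j with h | h <;> simp [h]))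
  exact ⟨m, hm.symm⟩

lemma eventually_add_smul_mem_Icc {x v : ι → ℝ} (hx : x ∈ Set.Icc 0 1)
    (hv : ∀ j, v j ≠ 0 → x j ∈ Set.Ioo 0 1) :
    ∀ᶠ t in 𝓝 (0 : ℝ), x + t • v ∈ Set.Icc 0 1 := by
  simp only [← Set.pi_univ_Icc, Set.mem_univ_pi] at hx ⊢
  refine eventually_all.2 fun j => ?_
  by_cases hj : v j = 0
  · exact Eventually.of_forall fun t => by simpa [hj] using hx j
  have hcont : Tendsto (fun t : ℝ => x j + t * v j) (𝓝 0) (𝓝 (x j)) := by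
    simpa using (by fun_prop : Continuous fun t : ℝ => x j + t * v j).tendsto 0
  exact (hcont.eventually (isOpen_Ioo.mem_nhds (hv j hj))).mono fun t ht =>
    Set.Ioo_subset_Icc_self ht

lemma exists_ne_zero_dotProduct_eq_zero_of_ne [DecidableEq ι] (a : ι → ℝ) {j₀ j₁ : ι}
    (hne : j₁ ≠ j₀) : ∃ v : ι → ℝ, v ≠ 0 ∧ (∀ j, v j ≠ 0 → j = j₀ ∨ j = j₁) ∧ a ⬝ᵥ v = 0 := by
  by_cases ha₁ : a j₁ = 0
  · refine ⟨Pi.single j₁ 1, by simp, fun j hj => Or.inr ?_, by simp [ha₁]⟩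
    by_contra h
    simp [h] at hj
  · refine ⟨Pi.single j₀ (a j₁) - Pi.single j₁ (a j₀), fun h => ha₁ ?_, fun j hj => ?_, ?_⟩
    · simpa [hne.symm] using congr_fun h j₀
    · by_contra h
      push Not at h
      simp [h.1, h.2] at hj
    · rw [dotProduct_sub, dotProduct_single, dotProduct_single, mul_comm, sub_self]

lemma exists_feasible_direction (hW : ∀ j, W j = -1 ∨ W j = 0 ∨ W j = 1) {c : ℤ}
    {x : ι → ℝ} (hx : x ∈ Set.Icc 0 1) (hc : (c : ℝ) ≤ W ⬝ᵥ x) {j₀ : ι}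
    (hj₀ : x j₀ ∈ Set.Ioo 0 1) :
    ∃ v : ι → ℝ, v ≠ 0 ∧ (∀ j, v j ≠ 0 → x j ∈ Set.Ioo 0 1) ∧
      ∀ t : ℝ, x + t • v ∈ Set.Icc 0 1 → (c : ℝ) ≤ W ⬝ᵥ (x + t • v) := by
  classical
  by_cases h₁ : ∃ j₁ ≠ j₀, x j₁ ∈ Set.Ioo 0 1
  · obtain ⟨j₁, hne, hj₁⟩ := h₁
    obtain ⟨v, hv, hsupp, hWv⟩ := exists_ne_zero_dotProduct_eq_zero_of_ne W hne
    refine ⟨v, hv, fun j hj => (hsupp j hj).elim (· ▸ hj₀) (· ▸ hj₁), fun t _ => ?_⟩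
    rwa [dotProduct_add, dotProduct_smul, hWv, smul_zero, add_zero]
  -- `x j₀` is the only fractional coordinate, so `W ⬝ᵥ x - W j₀ * x j₀` is an integer.
  push Not at h₁
  set x' := Function.update x j₀ 0
  have hx' : ∀ j, x' j = 0 ∨ x' j = 1 := by
    intro j
    by_cases h : j = j₀
    · simp [x', h]
    · obtain ⟨h0, h1⟩ := mem_Icc_iff_forall.1 hx j
      rw [show x' j = x j from Function.update_of_ne h _ _]
      by_contra! hne
      exact h₁ j h ⟨lt_of_le_of_ne h0 (Ne.symm hne.1), lt_of_le_of_ne h1 hne.2⟩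
  obtain ⟨m, hm⟩ := exists_int_dotProduct_eq hW hx'
  have hline : ∀ t : ℝ, W ⬝ᵥ (x + t • Pi.single j₀ 1) = m + W j₀ * (x j₀ + t) := by
    intro t
    have : x + t • Pi.single j₀ 1 = x' + (x j₀ + t) • Pi.single j₀ 1 := by
      ext j
      by_cases h : j = j₀ <;> simp [x', h]
    rw [this, dotProduct_add, dotProduct_smul, hm, dotProduct_single, smul_eq_mul]
    ring
  refine ⟨Pi.single j₀ 1, by simp, fun j hj => ?_, fun t ht => ?_⟩
  · by_cases h : j = j₀
    · exact h ▸ hj₀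
    · simp [h] at hj
  · have h0 := hline 0
    rw [zero_smul, add_zero, add_zero] at h0
    rw [hline]
    refine int_le_add_mul_of_mem_Icc (hW j₀) hj₀ (h0 ▸ hc) ?_
    simpa using (mem_Icc_iff_forall.1 ht) j₀

lemma extremePoints_Icc_inter_subset (hW : ∀ j, W j = -1 ∨ W j = 0 ∨ W j = 1) (c : ℤ) :
    (Set.Icc 0 1 ∩ {x : ι → ℝ | (c : ℝ) ≤ W ⬝ᵥ x}).extremePoints ℝ ⊆
      {x | ∀ j, x j = 0 ∨ x j = 1} := by
  intro x hx
  obtain ⟨hxI, hxc⟩ := extremePoints_subset hx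
  by_contra! h
  obtain ⟨j₀, hj₀⟩ : ∃ j₀, x j₀ ∈ Set.Ioo 0 1 := by
    obtain ⟨j₀, h0, h1⟩ : ∃ j, x j ≠ 0 ∧ x j ≠ 1 := by simpa [not_or] using h
    obtain ⟨hx0, hx1⟩ := mem_Icc_iff_forall.1 hxI j₀
    exact ⟨j₀, lt_of_le_of_ne hx0 (Ne.symm h0), lt_of_le_of_ne hx1 h1⟩
  obtain ⟨v, hv, hsupp, hWv⟩ := exists_feasible_direction hW hxI hxc hj₀
  have hline : ∀ᶠ t in 𝓝 (0 : ℝ),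
      x + t • v ∈ Set.Icc 0 1 ∩ {x : ι → ℝ | (c : ℝ) ≤ W ⬝ᵥ x} :=
    (eventually_add_smul_mem_Icc hxI hsupp).mono fun t ht => ⟨ht, hWv t ht⟩
  exact notMem_extremePoints_of_eventually hv hline hx

theorem Icc_inter_le_dotProduct_subset_convexHull (hW : ∀ j, W j = -1 ∨ W j = 0 ∨ W j = 1)
    (c : ℤ) :
    Set.Icc 0 1 ∩ {x : ι → ℝ | (c : ℝ) ≤ W ⬝ᵥ x} ⊆
      convexHull ℝ {v | (∀ j, v j = 0 ∨ v j = 1) ∧ (c : ℝ) ≤ W ⬝ᵥ v} := by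
  set P := Set.Icc 0 1 ∩ {x : ι → ℝ | (c : ℝ) ≤ W ⬝ᵥ x}
  set T := {v : ι → ℝ | (∀ j, v j = 0 ∨ v j = 1) ∧ (c : ℝ) ≤ W ⬝ᵥ v}
  have hcompact : IsCompact P :=
    isCompact_Icc.inter_right (isClosed_le continuous_const (by fun_prop))
  have hconvex : Convex ℝ P := (convex_Icc 0 1).inter <|
    convex_halfSpace_ge ⟨dotProduct_add W, fun r x => dotProduct_smul r W x⟩ _
  have hfinite : T.Finite :=
    (Set.Finite.pi (t := fun _ => ({0, 1} : Set ℝ)) fun _ => by simp).subset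
      fun v hv => by simpa using hv.1
  calc P = closure (convexHull ℝ (P.extremePoints ℝ)) :=
        (closure_convexHull_extremePoints hcompact hconvex).symm
    _ ⊆ closure (convexHull ℝ T) := closure_mono <| convexHull_mono fun x hx =>
        ⟨extremePoints_Icc_inter_subset hW c hx, (extremePoints_subset hx).2⟩
    _ = convexHull ℝ T := (hfinite.isClosed_convexHull (𝕜 := ℝ)).closure_eq

theorem Icc_inter_dotProduct_le_subset_convexHull (hW : ∀ j, W j = -1 ∨ W j = 0 ∨ W j = 1)
    (c : ℤ) :
    Set.Icc 0 1 ∩ {x : ι → ℝ | W ⬝ᵥ x ≤ c} ⊆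
      convexHull ℝ {v | (∀ j, v j = 0 ∨ v j = 1) ∧ W ⬝ᵥ v ≤ c} := by
  have hW' : ∀ j, (-W) j = -1 ∨ (-W) j = 0 ∨ (-W) j = 1 := fun j => by
    rcases hW j with h | h | h <;> simp [h]
  simpa [neg_dotProduct] using Icc_inter_le_dotProduct_subset_convexHull hW' (-c)

end Cube

namespace BinarizedNeuron

section Coordinate

/-- In the oriented coordinate `z` (`t`, or `1 - t` when `w = -1`) the upper part is
`min 1 (z / u)` and the lower part is `max 0 (z - u) / (1 - u)`. -/
noncomputable def upperPart (w u t : ℝ) : ℝ :=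
  if w = -1 then max 0 ((t + u - 1) / u) else min 1 (t / u)

noncomputable def lowerPart (w u t : ℝ) : ℝ :=
  if w = -1 then min 1 (t / (1 - u)) else max 0 (t - u) / (1 - u)

variable {w u t : ℝ}

lemma upperPart_mem_Icc (hu : 0 < u) (ht : t ∈ Set.Icc 0 1) : upperPart w u t ∈ Set.Icc 0 1 := by
  obtain ⟨ht₀, ht₁⟩ := ht
  unfold upperPart
  split_ifs
  · refine ⟨le_max_left _ _, max_le zero_le_one ?_⟩
    rw [div_le_one hu]
    linarith
  · exact ⟨le_min zero_le_one (div_nonneg ht₀ hu.le), min_le_left _ _⟩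

lemma lowerPart_mem_Icc (hu : u < 1) (ht : t ∈ Set.Icc 0 1) : lowerPart w u t ∈ Set.Icc 0 1 := by
  obtain ⟨ht₀, ht₁⟩ := ht
  have hu' : 0 < 1 - u := by linarith
  unfold lowerPart
  split_ifs
  · exact ⟨le_min zero_le_one (div_nonneg ht₀ hu'.le), min_le_left _ _⟩
  · refine ⟨div_nonneg (le_max_left _ _) hu'.le, (div_le_one hu').2 (max_le hu'.le ?_)⟩
    linarith

/-- At `u = 0` and `u = 1` this still holds: the part with weight zero is then `0`, via `x / 0 = 0`,
and the other part is `t`. -/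
lemma mul_upperPart_add_mul_lowerPart (hu₀ : 0 ≤ u) (hu₁ : u ≤ 1) (ht : t ∈ Set.Icc 0 1) :
    u * upperPart w u t + (1 - u) * lowerPart w u t = t := by
  obtain ⟨ht₀, ht₁⟩ := ht
  unfold upperPart lowerPart
  rcases hu₀.eq_or_lt with rfl | hu₀
  · split_ifs <;> simp [ht₀, ht₁]
  rcases hu₁.eq_or_lt with rfl | hu₁
  · split_ifs <;> simp [ht₀, ht₁]
  have hu' : 0 < 1 - u := by linarith
  split_ifs
  · rw [mul_max_of_nonneg _ _ hu₀.le, mul_min_of_nonneg _ _ hu'.le, mul_div_cancel₀ _ hu₀.ne',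
      mul_div_cancel₀ _ hu'.ne', mul_zero, mul_one]
    rcases le_total (t + u - 1) 0 with h | h
    · rw [max_eq_left h, min_eq_right (by linarith)]
      ring
    · rw [max_eq_right h, min_eq_left (by linarith)]
      ring
  · rw [mul_min_of_nonneg _ _ hu₀.le, mul_div_cancel₀ _ hu₀.ne', mul_div_cancel₀ _ hu'.ne',
      mul_one]
    rcases le_total t u with h | h
    · rw [min_eq_right (by linarith), max_eq_left (by linarith)]
      ring
    · rw [min_eq_left (by linarith), max_eq_right (by linarith)]
      ring

lemma mul_signed_upperPart (hw : w = -1 ∨ w = 1) (hu : 0 < u) :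
    u * (w * (2 * upperPart w u t - 1)) = u + min (w * (2 * t - 1) - (2 * u - 1)) 0 := by
  unfold upperPart
  rcases hw with rfl | rfl
  · rw [if_pos rfl]
    rcases le_total (t + u - 1) 0 with h | h
    · rw [max_eq_left (div_nonpos_of_nonpos_of_nonneg h hu.le), min_eq_right (by linarith)]
      ring
    · rw [max_eq_right (div_nonneg h hu.le), min_eq_left (by linarith)]
      field_simp
      ring
  · rw [if_neg (by norm_num)]
    rcases le_total t u with h | h
    · rw [min_eq_right ((div_le_one hu).2 h), min_eq_left (by linarith)]
      field_simp
      ring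
    · rw [min_eq_left ((one_le_div hu).2 h), min_eq_right (by linarith)]
      ring

lemma mul_signed_lowerPart (hw : w = -1 ∨ w = 1) (hu : u < 1) :
    (1 - u) * (w * (2 * lowerPart w u t - 1)) =
      max (w * (2 * t - 1) - (2 * u - 1)) 0 - (1 - u) := by
  have hu' : 0 < 1 - u := by linarith
  unfold lowerPart
  rcases hw with rfl | rfl
  · rw [if_pos rfl]
    rcases le_total t (1 - u) with h | h
    · rw [min_eq_right ((div_le_one hu').2 h), max_eq_left (by linarith)]
      field_simp
      ring
    · rw [min_eq_left ((one_le_div hu').2 h), max_eq_right (by linarith)]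
      ring
  · rw [if_neg (by norm_num)]
    rcases le_total t u with h | h
    · rw [max_eq_left (by linarith), max_eq_right (by linarith)]
      ring
    · rw [max_eq_right (by linarith), max_eq_left (by linarith)]
      field_simp
      ring

end Coordinate

variable {ι : Type*}

def neuronPolytope (W : ι → ℝ) (α β : ℝ) : Set ((ι → ℝ) × ℝ) :=
  {p | (∀ j, 0 ≤ p.1 j ∧ p.1 j ≤ 1) ∧ (0 ≤ p.2 ∧ p.2 ≤ 1) ∧
    ∀ J : Finset ι, (∀ j ∈ J, W j ≠ 0) →
      α * p.2 ≤ (∑ j ∈ J, (W j * (2 * p.1 j - 1) - (2 * p.2 - 1))) ∧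
        (∑ j ∈ J, (W j * (2 * p.1 j - 1) - (2 * p.2 - 1))) ≤ β * (1 - p.2)}

lemma convex_neuronPolytope {W : ι → ℝ} {α β : ℝ} : Convex ℝ (neuronPolytope W α β) := by
  rintro ⟨x, u⟩ ⟨hx, hu, hJ⟩ ⟨x', u'⟩ ⟨hx', hu', hJ'⟩ a b ha hb hab
  have hsum : ∀ J : Finset ι,
      ∑ j ∈ J, (W j * (2 * (a * x j + b * x' j) - 1) - (2 * (a * u + b * u') - 1)) =
        a * ∑ j ∈ J, (W j * (2 * x j - 1) - (2 * u - 1)) +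
          b * ∑ j ∈ J, (W j * (2 * x' j - 1) - (2 * u' - 1)) := fun J => by
    rw [mul_sum, mul_sum, ← sum_add_distrib]
    exact sum_congr rfl fun j _ => by linear_combination (W j - 1) * hab
  refine ⟨fun j => convex_Icc (0 : ℝ) 1 (hx j) (hx' j) ha hb hab,
    convex_Icc (0 : ℝ) 1 hu hu' ha hb hab, fun J hJW => ?_⟩
  simp only [Prod.smul_mk, Prod.mk_add_mk, Pi.add_apply, Pi.smul_apply, smul_eq_mul, hsum]
  obtain ⟨h₁, h₂⟩ := hJ J hJW
  obtain ⟨h₁', h₂'⟩ := hJ' J hJW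
  have h₁ := mul_le_mul_of_nonneg_left h₁ ha
  have h₁' := mul_le_mul_of_nonneg_left h₁' hb
  have h₂ := mul_le_mul_of_nonneg_left h₂ ha
  have h₂' := mul_le_mul_of_nonneg_left h₂' hb
  exact ⟨by linear_combination h₁ + h₁', by linear_combination h₂ + h₂' + β * hab⟩

variable [Fintype ι] {W : ι → ℝ}

def neuronGraph (W : ι → ℝ) (b : ℤ) : Set ((ι → ℝ) × ℝ) :=
  {p | (∀ j, p.1 j = 0 ∨ p.1 j = 1) ∧ (p.2 = 0 ∨ p.2 = 1) ∧
    p.2 = if 0 ≤ (∑ j, W j * (2 * p.1 j - 1)) + (b : ℝ) then 1 else 0}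

noncomputable def threshold (W : ι → ℝ) (b : ℤ) : ℤ := ⌈(∑ j, W j - b) / 2⌉

lemma sum_signed_eq (x : ι → ℝ) : ∑ j, W j * (2 * x j - 1) = 2 * (W ⬝ᵥ x) - ∑ j, W j := by
  simp only [mul_sub, mul_one, sum_sub_distrib, dotProduct, mul_sum]
  congr 1
  exact sum_congr rfl fun j _ => by ring

lemma sum_filter_ne_zero_signed_sub (x : ι → ℝ) (s : ℝ) :
    ∑ j with W j ≠ 0, (W j * (2 * x j - 1) - s) =
      ∑ j, W j * (2 * x j - 1) - #{j | W j ≠ 0} * s := by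
  rw [sum_sub_distrib, sum_const, nsmul_eq_mul, sum_filter_of_ne fun j _ h => ?_]
  rintro hj
  simp [hj] at h

lemma sum_filter_ne_zero_eq {f : ι → ℝ} (hf : ∀ j, W j = 0 → f j = 0) :
    ∑ j with W j ≠ 0, f j = ∑ j, f j :=
  sum_filter_of_ne fun j _ h hj => h (hf j hj)

lemma sum_abs_eq_card (hW : ∀ j, W j = -1 ∨ W j = 0 ∨ W j = 1) :
    ∑ j, |W j| = #{j | W j ≠ 0} := by
  rw [card_filter]
  push_cast
  refine sum_congr rfl fun j _ => ?_
  rcases hW j with h | h | h <;> simp [h]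

lemma signed_mem_Icc {w t : ℝ} (hw : w = -1 ∨ w = 0 ∨ w = 1) (ht : 0 ≤ t ∧ t ≤ 1) :
    -1 ≤ w * (2 * t - 1) ∧ w * (2 * t - 1) ≤ 1 := by
  obtain ⟨ht₀, ht₁⟩ := ht
  rcases hw with rfl | rfl | rfl <;> constructor <;> linarith

lemma preact_nonneg_iff {v : ι → ℝ} {m : ℤ} (b : ℤ) (hm : W ⬝ᵥ v = m) :
    0 ≤ (∑ j, W j * (2 * v j - 1)) + (b : ℝ) ↔ threshold W b ≤ m := by
  rw [threshold, Int.ceil_le, sum_signed_eq, hm]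
  constructor <;> intro h <;> linarith

lemma mem_neuronGraph_iff (hW : ∀ j, W j = -1 ∨ W j = 0 ∨ W j = 1) {b : ℤ}
    {p : (ι → ℝ) × ℝ} :
    p ∈ neuronGraph W b ↔ (∀ j, p.1 j = 0 ∨ p.1 j = 1) ∧
      (p.2 = 1 ∧ (threshold W b : ℝ) ≤ W ⬝ᵥ p.1 ∨ p.2 = 0 ∧ W ⬝ᵥ p.1 ≤ threshold W b - 1) := by
  constructor
  · rintro ⟨hv, -, hu⟩
    obtain ⟨m, hm⟩ := exists_int_dotProduct_eq hW hv
    simp only [preact_nonneg_iff b hm] at hu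
    refine ⟨hv, ?_⟩
    rw [hm]
    split_ifs at hu with h
    · exact Or.inl ⟨hu, by exact_mod_cast h⟩
    · exact Or.inr ⟨hu, by exact_mod_cast (by omega : m ≤ threshold W b - 1)⟩
  · rintro ⟨hv, h⟩
    obtain ⟨m, hm⟩ := exists_int_dotProduct_eq hW hv
    rw [hm] at h
    refine ⟨hv, by rcases h with ⟨h, -⟩ | ⟨h, -⟩ <;> simp [h], ?_⟩
    simp only [preact_nonneg_iff b hm]
    rcases h with ⟨hu, h⟩ | ⟨hu, h⟩
    · rw [if_pos (by exact_mod_cast h), hu]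
    · have : m ≤ threshold W b - 1 := by exact_mod_cast h
      rw [if_neg (by omega), hu]

lemma mem_neuronPolytope_iff {α β : ℝ} {p : (ι → ℝ) × ℝ} :
    p ∈ neuronPolytope W α β ↔ (∀ j, 0 ≤ p.1 j ∧ p.1 j ≤ 1) ∧ (0 ≤ p.2 ∧ p.2 ≤ 1) ∧
      α * p.2 ≤ ∑ j with W j ≠ 0, min (W j * (2 * p.1 j - 1) - (2 * p.2 - 1)) 0 ∧
      ∑ j with W j ≠ 0, max (W j * (2 * p.1 j - 1) - (2 * p.2 - 1)) 0 ≤ β * (1 - p.2) := by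
  have hS : ∀ J : Finset ι, (∀ j ∈ J, W j ≠ 0) ↔ J ⊆ ({j | W j ≠ 0} : Finset ι) := by
    simp [subset_iff]
  simp only [neuronPolytope, Set.mem_ofPred_eq, hS, ← forall_subset_le_sum_iff,
    ← forall_subset_sum_le_iff, imp_and, forall_and]

theorem neuronGraph_subset_neuronPolytope (hW : ∀ j, W j = -1 ∨ W j = 0 ∨ W j = 1) (b : ℤ) :
    neuronGraph W b ⊆ neuronPolytope W (2 * threshold W b - ∑ j, W j - #{j | W j ≠ 0})
      (2 * threshold W b - 2 - ∑ j, W j + #{j | W j ≠ 0}) := by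
  rintro ⟨v, u⟩ hp
  obtain ⟨hv, hvu⟩ := (mem_neuronGraph_iff hW).1 hp
  dsimp only at hv hvu
  have hbox : ∀ j, 0 ≤ v j ∧ v j ≤ 1 := fun j => by rcases hv j with h | h <;> simp [h]
  have hy := fun j => signed_mem_Icc (hW j) (hbox j)
  rw [mem_neuronPolytope_iff]
  rcases hvu with ⟨rfl, h⟩ | ⟨rfl, h⟩
  · have hmin : ∑ j with W j ≠ 0, min (W j * (2 * v j - 1) - (2 * 1 - 1)) 0 =
        ∑ j with W j ≠ 0, (W j * (2 * v j - 1) - (2 * 1 - 1)) :=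
      sum_congr rfl fun j _ => min_eq_left (by linarith [hy j])
    have hmax : ∑ j with W j ≠ 0, max (W j * (2 * v j - 1) - (2 * 1 - 1)) 0 = 0 :=
      sum_eq_zero fun j _ => max_eq_right (by linarith [hy j])
    refine ⟨hbox, by norm_num, ?_, by rw [hmax]; norm_num⟩
    rw [hmin, sum_filter_ne_zero_signed_sub, sum_signed_eq]
    linarith
  · have hmin : ∑ j with W j ≠ 0, min (W j * (2 * v j - 1) - (2 * 0 - 1)) 0 = 0 :=
      sum_eq_zero fun j _ => min_eq_right (by linarith [hy j])
    have hmax : ∑ j with W j ≠ 0, max (W j * (2 * v j - 1) - (2 * 0 - 1)) 0 =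
        ∑ j with W j ≠ 0, (W j * (2 * v j - 1) - (2 * 0 - 1)) :=
      sum_congr rfl fun j _ => max_eq_left (by linarith [hy j])
    refine ⟨hbox, by norm_num, by rw [hmin]; norm_num, ?_⟩
    rw [hmax, sum_filter_ne_zero_signed_sub, sum_signed_eq]
    linarith

lemma mk_one_mem_convexHull (hW : ∀ j, W j = -1 ∨ W j = 0 ∨ W j = 1) {b : ℤ} {x : ι → ℝ}
    (hx : x ∈ Set.Icc 0 1) (h : (threshold W b : ℝ) ≤ W ⬝ᵥ x) :
    (x, (1 : ℝ)) ∈ convexHull ℝ (neuronGraph W b) := by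
  set T := {v : ι → ℝ | (∀ j, v j = 0 ∨ v j = 1) ∧ (threshold W b : ℝ) ≤ W ⬝ᵥ v}
  have hx' : x ∈ convexHull ℝ T :=
    Icc_inter_le_dotProduct_subset_convexHull hW (threshold W b) ⟨hx, h⟩
  refine convexHull_mono ?_ (show (x, (1 : ℝ)) ∈ convexHull ℝ (T ×ˢ {1}) by
    rw [convexHull_prod, convexHull_singleton]
    exact ⟨hx', rfl⟩)
  rintro ⟨v, u⟩ ⟨⟨hv, hvK⟩, rfl⟩
  exact (mem_neuronGraph_iff hW).2 ⟨hv, Or.inl ⟨rfl, hvK⟩⟩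

lemma mk_zero_mem_convexHull (hW : ∀ j, W j = -1 ∨ W j = 0 ∨ W j = 1) {b : ℤ} {x : ι → ℝ}
    (hx : x ∈ Set.Icc 0 1) (h : W ⬝ᵥ x ≤ threshold W b - 1) :
    (x, (0 : ℝ)) ∈ convexHull ℝ (neuronGraph W b) := by
  set T := {v : ι → ℝ | (∀ j, v j = 0 ∨ v j = 1) ∧ W ⬝ᵥ v ≤ (threshold W b - 1 : ℤ)}
  have hx' : x ∈ convexHull ℝ T :=
    Icc_inter_dotProduct_le_subset_convexHull hW (threshold W b - 1) ⟨hx, by exact_mod_cast h⟩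
  refine convexHull_mono ?_ (show (x, (0 : ℝ)) ∈ convexHull ℝ (T ×ˢ {0}) by
    rw [convexHull_prod, convexHull_singleton]
    exact ⟨hx', rfl⟩)
  rintro ⟨v, u⟩ ⟨⟨hv, hvK⟩, rfl⟩
  exact (mem_neuronGraph_iff hW).2 ⟨hv, Or.inr ⟨rfl, by exact_mod_cast hvK⟩⟩

lemma upperPart_mem_convexHull (hW : ∀ j, W j = -1 ∨ W j = 0 ∨ W j = 1) {b : ℤ}
    {x : ι → ℝ} {u : ℝ} (hx : ∀ j, 0 ≤ x j ∧ x j ≤ 1) (hu : 0 < u)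
    (h : (2 * threshold W b - ∑ j, W j - #{j | W j ≠ 0}) * u ≤
      ∑ j with W j ≠ 0, min (W j * (2 * x j - 1) - (2 * u - 1)) 0) :
    (fun j => upperPart (W j) u (x j), (1 : ℝ)) ∈ convexHull ℝ (neuronGraph W b) := by
  refine mk_one_mem_convexHull hW (mem_Icc_iff_forall.2 fun j => upperPart_mem_Icc hu (hx j)) ?_
  have key : u * ∑ j, W j * (2 * upperPart (W j) u (x j) - 1) =
      ∑ j with W j ≠ 0, (u + min (W j * (2 * x j - 1) - (2 * u - 1)) 0) := by
    rw [mul_sum, ← sum_filter_ne_zero_eq (W := W)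
      (f := fun j => u * (W j * (2 * upperPart (W j) u (x j) - 1))) fun j hj => by simp [hj]]
    exact sum_congr rfl fun j hj =>
      mul_signed_upperPart ((hW j).imp_right (Or.resolve_left · (mem_filter.1 hj).2)) hu
  rw [sum_add_distrib, sum_const, nsmul_eq_mul, sum_signed_eq] at key
  by_contra! hlt
  nlinarith

lemma lowerPart_mem_convexHull (hW : ∀ j, W j = -1 ∨ W j = 0 ∨ W j = 1) {b : ℤ}
    {x : ι → ℝ} {u : ℝ} (hx : ∀ j, 0 ≤ x j ∧ x j ≤ 1) (hu : u < 1)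
    (h : ∑ j with W j ≠ 0, max (W j * (2 * x j - 1) - (2 * u - 1)) 0 ≤
      (2 * threshold W b - 2 - ∑ j, W j + #{j | W j ≠ 0}) * (1 - u)) :
    (fun j => lowerPart (W j) u (x j), (0 : ℝ)) ∈ convexHull ℝ (neuronGraph W b) := by
  refine mk_zero_mem_convexHull hW (mem_Icc_iff_forall.2 fun j => lowerPart_mem_Icc hu (hx j)) ?_
  have key : (1 - u) * ∑ j, W j * (2 * lowerPart (W j) u (x j) - 1) =
      ∑ j with W j ≠ 0, (max (W j * (2 * x j - 1) - (2 * u - 1)) 0 - (1 - u)) := by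
    rw [mul_sum, ← sum_filter_ne_zero_eq (W := W)
      (f := fun j => (1 - u) * (W j * (2 * lowerPart (W j) u (x j) - 1))) fun j hj => by simp [hj]]
    exact sum_congr rfl fun j hj =>
      mul_signed_lowerPart ((hW j).imp_right (Or.resolve_left · (mem_filter.1 hj).2)) hu
  rw [sum_sub_distrib, sum_const, nsmul_eq_mul, sum_signed_eq] at key
  by_contra! hlt
  nlinarith

theorem neuronPolytope_subset_convexHull (hW : ∀ j, W j = -1 ∨ W j = 0 ∨ W j = 1) (b : ℤ) :
    neuronPolytope W (2 * threshold W b - ∑ j, W j - #{j | W j ≠ 0})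
      (2 * threshold W b - 2 - ∑ j, W j + #{j | W j ≠ 0}) ⊆ convexHull ℝ (neuronGraph W b) := by
  rintro ⟨x, u⟩ hp
  obtain ⟨hx, ⟨hu₀, hu₁⟩, hupper, hlower⟩ := mem_neuronPolytope_iff.1 hp
  have hsplit : (x, u) = u • (fun j => upperPart (W j) u (x j), (1 : ℝ)) +
      (1 - u) • (fun j => lowerPart (W j) u (x j), (0 : ℝ)) := by
    ext j
    · simp [mul_upperPart_add_mul_lowerPart hu₀ hu₁ (hx j)]
    · simp
  rw [hsplit]
  exact (convex_convexHull ℝ _).combo_mem_of_pos_of_lt_one hu₀ hu₁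
    (fun hu => upperPart_mem_convexHull hW hx hu hupper)
    (fun hu => lowerPart_mem_convexHull hW hx hu hlower)

theorem convexHull_neuronGraph (hW : ∀ j, W j = -1 ∨ W j = 0 ∨ W j = 1) (b : ℤ) :
    convexHull ℝ (neuronGraph W b) =
      neuronPolytope W (2 * threshold W b - ∑ j, W j - #{j | W j ≠ 0})
        (2 * threshold W b - 2 - ∑ j, W j + #{j | W j ≠ 0}) :=
  (convexHull_min (neuronGraph_subset_neuronPolytope hW b) convex_neuronPolytope).antisymm
    (neuronPolytope_subset_convexHull hW b)

end BinarizedNeuron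

open BinarizedNeuron

/-- Theorem (convex hull of a single binarized neuron): the convex hull in `ℝ^n × ℝ` of
`{(x, u) ∈ {0,1}^n × {0,1} : u = 1_{ℝ₊}(a(x))}` equals the set of `(x, u) ∈ [0,1]^n × [0,1]`
satisfying, for every subset `J` of the support of `W`, the two inequalities
`∑_{j ∈ J} (W j (2 x j - 1) - (2u - 1)) ≥ (R - UB + 1) u` and
`∑_{j ∈ J} (W j (2 x j - 1) - (2u - 1)) ≤ (R - LB - 1)(1 - u)`. -/
theorem stmt_8 (n : ℕ) (W : Fin n → ℝ) (b : ℤ)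
    (hW : ∀ j, W j = -1 ∨ W j = 0 ∨ W j = 1)
    (LB UB R : ℝ)
    (hLB : LB = ∑ j, (W j - |W j|))
    (hUB : UB = ∑ j, (W j + |W j|))
    (hR : R = 2 * (⌈((∑ j, W j) - (b : ℝ)) / 2⌉ : ℝ) - 1) :
    convexHull ℝ
        {p : (Fin n → ℝ) × ℝ |
          (∀ j, p.1 j = 0 ∨ p.1 j = 1) ∧ (p.2 = 0 ∨ p.2 = 1) ∧
            p.2 = if 0 ≤ (∑ j, W j * (2 * p.1 j - 1)) + (b : ℝ) then 1 else 0} =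
      {p : (Fin n → ℝ) × ℝ |
        (∀ j, 0 ≤ p.1 j ∧ p.1 j ≤ 1) ∧ (0 ≤ p.2 ∧ p.2 ≤ 1) ∧
          ∀ J : Finset (Fin n), (∀ j ∈ J, W j ≠ 0) →
            (R - UB + 1) * p.2 ≤ (∑ j ∈ J, (W j * (2 * p.1 j - 1) - (2 * p.2 - 1))) ∧
              (∑ j ∈ J, (W j * (2 * p.1 j - 1) - (2 * p.2 - 1))) ≤
                (R - LB - 1) * (1 - p.2)} := by
  have hα : R - UB + 1 = 2 * threshold W b - ∑ j, W j - #{j | W j ≠ 0} := by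
    rw [hR, hUB, sum_add_distrib, sum_abs_eq_card hW, threshold]
    ring
  have hβ : R - LB - 1 = 2 * threshold W b - 2 - ∑ j, W j + #{j | W j ≠ 0} := by
    rw [hR, hLB, sum_sub_distrib, sum_abs_eq_card hW, threshold]
    ring
  change convexHull ℝ (neuronGraph W b) = neuronPolytope W (R - UB + 1) (R - LB - 1)
  rw [hα, hβ]
  exact convexHull_neuronGraph hW b
end

section
/- The convex hull in ℝ^n of the set X⁺ = {x ∈ {0,1}^n : Σ_{j=1}^n W_j x_j ≥ (R + 1)/2} equals the set {x ∈ [0,1]^n : Σ_{j=1}^n W_j x_j ≥ (R + 1)/2}; that is, the linear relaxation of this knapsack-type constraint with coefficients in {−1,0,1} and integer right-hand side is integral. -/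
open Finset

private lemma sum_indicator' {n : ℕ} (f : Fin n → ℝ) (j : Fin n) (c : ℝ) :
    ∑ i, f i * (if i = j then c else 0) = f j * c := by
  simp [mul_ite, Finset.sum_ite_eq']

private lemma mem_seg' {n : ℕ} (x d : Fin n → ℝ) {a b : ℝ} (ha : 0 < a) (hb : 0 < b) :
    x ∈ segment ℝ (fun i => x i + a * d i) (fun i => x i - b * d i) := by
  have hab : 0 < a + b := by linarith
  refine ⟨b / (a + b), a / (a + b), by positivity, by positivity, by field_simp; ring, ?_⟩
  funext i
  simp only [Pi.add_apply, Pi.smul_apply, smul_eq_mul]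
  field_simp
  ring

open scoped Classical in
private lemma frac_card_le' {n : ℕ} {x y : Fin n → ℝ} {j : Fin n} {m : ℕ}
    (hxj : x j ≠ 0 ∧ x j ≠ 1)
    (hyj : y j = 0 ∨ y j = 1)
    (hoff : ∀ i, i ≠ j → (y i ≠ 0 ∧ y i ≠ 1) → (x i ≠ 0 ∧ x i ≠ 1))
    (hcard : (Finset.univ.filter (fun i => x i ≠ 0 ∧ x i ≠ 1)).card ≤ m + 1) :
    (Finset.univ.filter (fun i => y i ≠ 0 ∧ y i ≠ 1)).card ≤ m := by
  have hsub : (Finset.univ.filter (fun i => y i ≠ 0 ∧ y i ≠ 1)) ⊆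
      (Finset.univ.filter (fun i => x i ≠ 0 ∧ x i ≠ 1)).erase j := by
    intro i hi
    simp only [mem_filter, mem_univ, true_and] at hi
    rcases eq_or_ne i j with rfl | hne
    · rcases hyj with h | h <;> simp [h] at hi
    · exact Finset.mem_erase.mpr ⟨hne, by
        simp only [mem_filter, mem_univ, true_and]; exact hoff i hne hi⟩
  have hjmem : j ∈ (Finset.univ.filter (fun i => x i ≠ 0 ∧ x i ≠ 1)) := by simp [hxj.1, hxj.2]
  have h2 := Finset.card_le_card hsub
  rw [Finset.card_erase_of_mem hjmem] at h2
  omega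

private lemma sideC' {n : ℕ} (W : Fin n → ℝ) (K : ℝ) (x : Fin n → ℝ)
    (hbox : ∀ j, 0 ≤ x j ∧ x j ≤ 1) (hsum : K ≤ ∑ j, W j * x j)
    (j₀ j₁ : Fin n) (hne : j₀ ≠ j₁)
    (h0 : x j₀ ≠ 0 ∧ x j₀ ≠ 1) (h1 : x j₁ ≠ 0 ∧ x j₁ ≠ 1)
    (c₀ c₁ : ℝ) (hc₀ : c₀ = 1 ∨ c₀ = -1) (hc₁ : c₁ = 1 ∨ c₁ = -1)
    (hWd : W j₀ * c₀ + W j₁ * c₁ = 0) :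
    ∃ t y, 0 < t ∧
      y = (fun i => x i + t * ((if i = j₀ then c₀ else 0) + (if i = j₁ then c₁ else 0))) ∧
      (∀ j, 0 ≤ y j ∧ y j ≤ 1) ∧ K ≤ ∑ j, W j * y j ∧
      ∃ j', (x j' ≠ 0 ∧ x j' ≠ 1) ∧ (y j' = 0 ∨ y j' = 1) ∧
        ∀ i, i ≠ j' → (y i ≠ 0 ∧ y i ≠ 1) → (x i ≠ 0 ∧ x i ≠ 1) := by
  have hu0 : 0 < x j₀ := (hbox j₀).1.lt_of_ne (Ne.symm h0.1)
  have hu1 : x j₀ < 1 := (hbox j₀).2.lt_of_ne h0.2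
  have hv0 : 0 < x j₁ := (hbox j₁).1.lt_of_ne (Ne.symm h1.1)
  have hv1 : x j₁ < 1 := (hbox j₁).2.lt_of_ne h1.2
  set A := (1 - c₀ * (2 * x j₀ - 1)) / 2 with hA
  set B := (1 - c₁ * (2 * x j₁ - 1)) / 2 with hB
  have hApos : 0 < A := by rcases hc₀ with rfl | rfl <;> (rw [hA]; linarith)
  have hBpos : 0 < B := by rcases hc₁ with rfl | rfl <;> (rw [hB]; linarith)
  set t := min A B with htdef
  have ht0 : 0 < t := lt_min hApos hBpos
  have htA : t ≤ A := min_le_left _ _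
  have htB : t ≤ B := min_le_right _ _
  set y := (fun i => x i + t * ((if i = j₀ then c₀ else 0) + (if i = j₁ then c₁ else 0)))
    with hy
  have hyj₀ : y j₀ = x j₀ + t * c₀ := by simp [hy, hne]
  have hyj₁ : y j₁ = x j₁ + t * c₁ := by simp [hy, Ne.symm hne]
  have hyoff : ∀ i, i ≠ j₀ → i ≠ j₁ → y i = x i := by
    intro i hi0 hi1; simp [hy, hi0, hi1]
  refine ⟨t, y, ht0, rfl, ?_, ?_, ?_⟩
  · intro i
    by_cases hi0 : i = j₀
    · subst hi0; rw [hyj₀]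
      rcases hc₀ with rfl | rfl <;> constructor <;> nlinarith [htA, hA]
    · by_cases hi1 : i = j₁
      · subst hi1; rw [hyj₁]
        rcases hc₁ with rfl | rfl <;> constructor <;> nlinarith [htB, hB]
      · rw [hyoff i hi0 hi1]; exact hbox i
  · have hrw : ∀ i, W i * y i =
        W i * x i + t * (W i * (if i = j₀ then c₀ else 0))
          + t * (W i * (if i = j₁ then c₁ else 0)) := by
      intro i; rw [hy]; ring
    rw [Finset.sum_congr rfl (fun i _ => hrw i), Finset.sum_add_distrib,
      Finset.sum_add_distrib, ← Finset.mul_sum, ← Finset.mul_sum,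
      sum_indicator', sum_indicator']
    have : t * (W j₀ * c₀) + t * (W j₁ * c₁) = 0 := by
      rw [← mul_add, hWd, mul_zero]
    linarith
  · rcases min_choice A B with hmin | hmin
    · refine ⟨j₀, h0, ?_, ?_⟩
      · rw [hyj₀, htdef, hmin]
        rcases hc₀ with rfl | rfl
        · right; rw [hA]; ring
        · left; rw [hA]; ring
      · intro i hi0 hfr
        by_cases hi1 : i = j₁
        · subst hi1; exact h1
        · rw [hyoff i hi0 hi1] at hfr; exact hfr
    · refine ⟨j₁, h1, ?_, ?_⟩
      · rw [hyj₁, htdef, hmin]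
        rcases hc₁ with rfl | rfl
        · right; rw [hB]; ring
        · left; rw [hB]; ring
      · intro i hi1 hfr
        by_cases hi0 : i = j₀
        · subst hi0; exact h0
        · rw [hyoff i hi0 hi1] at hfr; exact hfr

open scoped Classical in
private lemma roundCase' {n : ℕ} (W : Fin n → ℝ) (K : ℝ) (m : ℕ)
    (ih : ∀ y : Fin n → ℝ, (∀ j, 0 ≤ y j ∧ y j ≤ 1) → K ≤ ∑ j, W j * y j →
      (Finset.univ.filter (fun j => y j ≠ 0 ∧ y j ≠ 1)).card ≤ m →
      y ∈ convexHull ℝ {y : Fin n → ℝ | (∀ j, y j = 0 ∨ y j = 1) ∧ K ≤ ∑ j, W j * y j})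
    (x : Fin n → ℝ) (hbox : ∀ j, 0 ≤ x j ∧ x j ≤ 1)
    (hcard : (Finset.univ.filter (fun j => x j ≠ 0 ∧ x j ≠ 1)).card ≤ m + 1)
    (j₀ : Fin n) (hfrac : x j₀ ≠ 0 ∧ x j₀ ≠ 1)
    (hyfeas : K ≤ (∑ i, W i * x i) + (1 - x j₀) * W j₀)
    (hzfeas : K ≤ (∑ i, W i * x i) - x j₀ * W j₀) :
    x ∈ convexHull ℝ {y : Fin n → ℝ | (∀ j, y j = 0 ∨ y j = 1) ∧ K ≤ ∑ j, W j * y j} := by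
  have hu0 : 0 < x j₀ := (hbox j₀).1.lt_of_ne (Ne.symm hfrac.1)
  have hu1 : x j₀ < 1 := (hbox j₀).2.lt_of_ne hfrac.2
  set d : Fin n → ℝ := fun i => if i = j₀ then (1:ℝ) else 0 with hd
  set y : Fin n → ℝ := fun i => x i + (1 - x j₀) * d i with hy
  set z : Fin n → ℝ := fun i => x i - x j₀ * d i with hz
  have hyj₀ : y j₀ = 1 := by simp [hy, hd]
  have hzj₀ : z j₀ = 0 := by simp [hz, hd]
  have hyoff : ∀ i, i ≠ j₀ → y i = x i := by intro i hi; simp [hy, hd, hi]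
  have hzoff : ∀ i, i ≠ j₀ → z i = x i := by intro i hi; simp [hz, hd, hi]
  have hysum : ∑ i, W i * y i = (∑ i, W i * x i) + (1 - x j₀) * W j₀ := by
    have hrw : ∀ i, W i * y i =
        W i * x i + (1 - x j₀) * (W i * (if i = j₀ then (1:ℝ) else 0)) := by
      intro i; rw [hy]; ring
    rw [Finset.sum_congr rfl (fun i _ => hrw i), Finset.sum_add_distrib, ← Finset.mul_sum,
      sum_indicator']
    ring
  have hzsum : ∑ i, W i * z i = (∑ i, W i * x i) - x j₀ * W j₀ := by
    have hrw : ∀ i, W i * z i =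
        W i * x i - x j₀ * (W i * (if i = j₀ then (1:ℝ) else 0)) := by
      intro i; rw [hz]; ring
    rw [Finset.sum_congr rfl (fun i _ => hrw i), Finset.sum_sub_distrib, ← Finset.mul_sum,
      sum_indicator']
    ring
  have hybox : ∀ j, 0 ≤ y j ∧ y j ≤ 1 := by
    intro i
    by_cases hi : i = j₀
    · subst hi; rw [hyj₀]; norm_num
    · rw [hyoff i hi]; exact hbox i
  have hzbox : ∀ j, 0 ≤ z j ∧ z j ≤ 1 := by
    intro i
    by_cases hi : i = j₀
    · subst hi; rw [hzj₀]; norm_num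
    · rw [hzoff i hi]; exact hbox i
  have hycard : (Finset.univ.filter (fun j => y j ≠ 0 ∧ y j ≠ 1)).card ≤ m := by
    refine frac_card_le' hfrac (Or.inr hyj₀) ?_ hcard
    intro i hi h; rw [hyoff i hi] at h; exact h
  have hzcard : (Finset.univ.filter (fun j => z j ≠ 0 ∧ z j ≠ 1)).card ≤ m := by
    refine frac_card_le' hfrac (Or.inl hzj₀) ?_ hcard
    intro i hi h; rw [hzoff i hi] at h; exact h
  have hyh := ih y hybox (by rw [hysum]; exact hyfeas) hycard
  have hzh := ih z hzbox (by rw [hzsum]; exact hzfeas) hzcard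
  exact (convex_convexHull ℝ _).segment_subset hyh hzh
    (mem_seg' x d (by linarith) hu0)

open scoped Classical in
private lemma key' {n : ℕ} (W : Fin n → ℝ)
    (hW : ∀ j, W j = -1 ∨ W j = 0 ∨ W j = 1) (K : ℤ) :
    ∀ m : ℕ, ∀ x : Fin n → ℝ, (∀ j, 0 ≤ x j ∧ x j ≤ 1) → ((K : ℝ) ≤ ∑ j, W j * x j) →
    (Finset.univ.filter (fun j => x j ≠ 0 ∧ x j ≠ 1)).card ≤ m →
    x ∈ convexHull ℝ {y : Fin n → ℝ | (∀ j, y j = 0 ∨ y j = 1) ∧ (K : ℝ) ≤ ∑ j, W j * y j} := by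
  intro m
  induction m with
  | zero =>
    intro x hbox hsum hcard
    apply subset_convexHull
    refine ⟨?_, hsum⟩
    intro j
    by_contra hj
    push_neg at hj
    have hjm : j ∈ Finset.univ.filter (fun j => x j ≠ 0 ∧ x j ≠ 1) := by
      simp only [mem_filter, mem_univ, true_and]; exact hj
    have := Finset.card_pos.mpr ⟨j, hjm⟩
    omega
  | succ m ih =>
    intro x hbox hsum hcard
    by_cases hm : (Finset.univ.filter (fun j => x j ≠ 0 ∧ x j ≠ 1)).card ≤ m
    · exact ih x hbox hsum hm
    have hcard' : (Finset.univ.filter (fun j => x j ≠ 0 ∧ x j ≠ 1)).card = m + 1 := by omega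
    by_cases hzero : ∃ j, (x j ≠ 0 ∧ x j ≠ 1) ∧ W j = 0
    · -- Case A : a fractional coordinate with zero weight
      obtain ⟨j₀, hfrac, hW0⟩ := hzero
      refine roundCase' W K m ih x hbox (le_of_eq hcard') j₀ hfrac ?_ ?_ <;>
        rw [hW0] <;> ring_nf <;> linarith
    push_neg at hzero
    rcases Nat.eq_zero_or_pos m with hm0 | hmpos
    · -- Case B : exactly one fractional coordinate, W j₀ = ±1
      subst hm0
      obtain ⟨j₀, hj₀⟩ := Finset.card_eq_one.mp hcard'
      have hfrac : x j₀ ≠ 0 ∧ x j₀ ≠ 1 := by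
        have : j₀ ∈ Finset.univ.filter (fun j => x j ≠ 0 ∧ x j ≠ 1) := by
          rw [hj₀]; exact Finset.mem_singleton_self j₀
        simpa using this
      have hint : ∀ i, i ≠ j₀ → x i = 0 ∨ x i = 1 := by
        intro i hi
        by_contra h
        push_neg at h
        have : i ∈ Finset.univ.filter (fun j => x j ≠ 0 ∧ x j ≠ 1) := by simpa using h
        rw [hj₀, Finset.mem_singleton] at this
        exact hi this
      have hu0 : 0 < x j₀ := (hbox j₀).1.lt_of_ne (Ne.symm hfrac.1)
      have hu1 : x j₀ < 1 := (hbox j₀).2.lt_of_ne hfrac.2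
      have hsplit : W j₀ * x j₀ + ∑ i ∈ Finset.univ.erase j₀, W i * x i = ∑ i, W i * x i :=
        Finset.add_sum_erase _ (fun i => W i * x i) (Finset.mem_univ j₀)
      obtain ⟨M, hM⟩ : ∃ M : ℤ, (M:ℝ) = ∑ i ∈ Finset.univ.erase j₀, W i * x i := by
        refine Finset.sum_induction _ (fun r => ∃ M : ℤ, (M:ℝ) = r) ?_ ⟨0, by simp⟩ ?_
        · rintro a b ⟨Ma, ha⟩ ⟨Mb, hb⟩
          exact ⟨Ma + Mb, by push_cast; rw [ha, hb]⟩
        · intro i hi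
          rcases hint i (Finset.ne_of_mem_erase hi) with h | h
          · exact ⟨0, by simp [h]⟩
          · rcases hW i with hw | hw | hw
            · exact ⟨-1, by simp [h, hw]⟩
            · exact ⟨0, by simp [h, hw]⟩
            · exact ⟨1, by simp [h, hw]⟩
      have hsign : W j₀ = -1 ∨ W j₀ = 1 := by
        rcases hW j₀ with h | h | h
        · exact Or.inl h
        · exact absurd h (hzero j₀ hfrac)
        · exact Or.inr h
      have hyfeas : (K:ℝ) ≤ (∑ i, W i * x i) + (1 - x j₀) * W j₀ := by
        rcases hsign with h | h
        · have hKM : (K:ℝ) < (M:ℝ) := by rw [h] at hsplit; linarith [hM]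
          have hK1 : K ≤ M - 1 := by
            have : K < M := by exact_mod_cast hKM
            omega
          have hK1' : (K:ℝ) ≤ (M:ℝ) - 1 := by exact_mod_cast hK1
          rw [h] at hsplit ⊢
          linarith [hM]
        · rw [h] at hsplit ⊢
          linarith
      have hzfeas : (K:ℝ) ≤ (∑ i, W i * x i) - x j₀ * W j₀ := by
        rcases hsign with h | h
        · rw [h] at hsplit ⊢
          linarith
        · have hKM : (K:ℝ) < (M:ℝ) + 1 := by rw [h] at hsplit; linarith [hM]
          have hK1 : K ≤ M := by
            have : K < M + 1 := by exact_mod_cast hKM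
            omega
          have hK1' : (K:ℝ) ≤ (M:ℝ) := by exact_mod_cast hK1
          rw [h] at hsplit ⊢
          linarith [hM]
      exact roundCase' W K 0 ih x hbox (le_of_eq hcard') j₀ hfrac hyfeas hzfeas
    · -- Case C : at least two fractional coordinates, both with W = ±1
      have h2 : 1 < (Finset.univ.filter (fun j => x j ≠ 0 ∧ x j ≠ 1)).card := by omega
      obtain ⟨j₀, hj₀mem, j₁, hj₁mem, hne⟩ := Finset.one_lt_card.mp h2
      have hfrac0 : x j₀ ≠ 0 ∧ x j₀ ≠ 1 := by simpa using hj₀mem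
      have hfrac1 : x j₁ ≠ 0 ∧ x j₁ ≠ 1 := by simpa using hj₁mem
      have hw0 : W j₀ = -1 ∨ W j₀ = 1 := by
        rcases hW j₀ with h | h | h
        · exact Or.inl h
        · exact absurd h (hzero j₀ hfrac0)
        · exact Or.inr h
      have hw1 : W j₁ = -1 ∨ W j₁ = 1 := by
        rcases hW j₁ with h | h | h
        · exact Or.inl h
        · exact absurd h (hzero j₁ hfrac1)
        · exact Or.inr h
      have hc₁y : -(W j₀ * W j₁) = 1 ∨ -(W j₀ * W j₁) = -1 := by
        rcases hw0 with h | h <;> rcases hw1 with h' | h' <;> rw [h, h'] <;> norm_num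
      have hWdy : W j₀ * 1 + W j₁ * (-(W j₀ * W j₁)) = 0 := by
        rcases hw0 with h | h <;> rcases hw1 with h' | h' <;> rw [h, h'] <;> norm_num
      have hc₁z : W j₀ * W j₁ = 1 ∨ W j₀ * W j₁ = -1 := by
        rcases hw0 with h | h <;> rcases hw1 with h' | h' <;> rw [h, h'] <;> norm_num
      have hWdz : W j₀ * (-1) + W j₁ * (W j₀ * W j₁) = 0 := by
        rcases hw0 with h | h <;> rcases hw1 with h' | h' <;> rw [h, h'] <;> norm_num
      obtain ⟨t₁, y, ht₁, hydef, hybox, hysum, jy, hjyfrac, hjyint, hjyoff⟩ :=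
        sideC' W (K:ℝ) x hbox hsum j₀ j₁ hne hfrac0 hfrac1 1 (-(W j₀ * W j₁))
          (Or.inl rfl) hc₁y hWdy
      obtain ⟨t₂, z, ht₂, hzdef, hzbox, hzsum, jz, hjzfrac, hjzint, hjzoff⟩ :=
        sideC' W (K:ℝ) x hbox hsum j₀ j₁ hne hfrac0 hfrac1 (-1) (W j₀ * W j₁)
          (Or.inr rfl) hc₁z hWdz
      have hycard := frac_card_le' hjyfrac hjyint hjyoff (le_of_eq hcard')
      have hzcard := frac_card_le' hjzfrac hjzint hjzoff (le_of_eq hcard')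
      have hyh := ih y hybox hysum hycard
      have hzh := ih z hzbox hzsum hzcard
      set dfun : Fin n → ℝ :=
        fun i => (if i = j₀ then (1:ℝ) else 0) + (if i = j₁ then -(W j₀ * W j₁) else 0)
        with hdfun
      have hy2 : (fun i => x i + t₁ * dfun i) = y := by
        funext i; simp only [hydef, hdfun]
      have hz2 : (fun i => x i - t₂ * dfun i) = z := by
        funext i
        rcases eq_or_ne i j₀ with rfl | h0
        · simp only [hzdef, hdfun]
          simp [hne]
          try ring
        · rcases eq_or_ne i j₁ with rfl | h1
          · simp only [hzdef, hdfun]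
            simp [h0]
            try ring
          · simp only [hzdef, hdfun]
            simp [h0, h1]
      rw [← hy2] at hyh
      rw [← hz2] at hzh
      exact (convex_convexHull ℝ _).segment_subset hyh hzh (mem_seg' x dfun ht₁ ht₂)

/-- Integrality of `X⁺`: for weights in `{-1,0,1}` and odd integer `R`, the convex hull of
`{x ∈ {0,1}^n : ∑ W j x j ≥ (R+1)/2}` is exactly its linear relaxation
`{x ∈ [0,1]^n : ∑ W j x j ≥ (R+1)/2}`. -/
theorem stmt_9 (n : ℕ) (W : Fin n → ℝ)
    (hW : ∀ j, W j = -1 ∨ W j = 0 ∨ W j = 1)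
    (R : ℤ) (hR : Odd R) :
    convexHull ℝ
        {x : Fin n → ℝ | (∀ j, x j = 0 ∨ x j = 1) ∧ ((R : ℝ) + 1) / 2 ≤ ∑ j, W j * x j} =
      {x : Fin n → ℝ | (∀ j, 0 ≤ x j ∧ x j ≤ 1) ∧ ((R : ℝ) + 1) / 2 ≤ ∑ j, W j * x j} := by
  obtain ⟨r, hr⟩ := hR
  have hK : ((R : ℝ) + 1) / 2 = ((r + 1 : ℤ) : ℝ) := by
    rw [hr]; push_cast; ring
  rw [hK]
  apply le_antisymm
  · -- convex hull ⊆ relaxation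
    apply convexHull_min
    · intro x hx
      refine ⟨fun j => ?_, hx.2⟩
      rcases hx.1 j with h | h <;> rw [h] <;> norm_num
    · -- the relaxation is convex
      intro u hu v hv a b ha hb hab
      constructor
      · intro j
        have h1 := (hu.1 j).1
        have h2 := (hu.1 j).2
        have h3 := (hv.1 j).1
        have h4 := (hv.1 j).2
        constructor
        · have : a * u j + b * v j ≥ 0 := by positivity
          simpa using this
        · have : a * u j + b * v j ≤ a + b := by nlinarith
          simpa [hab] using this
      · have hrw : ∀ j, W j * (a • u + b • v) j = a * (W j * u j) + b * (W j * v j) := by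
          intro j; simp [Pi.add_apply, Pi.smul_apply, smul_eq_mul]; ring
        rw [Finset.sum_congr rfl (fun j _ => hrw j), Finset.sum_add_distrib,
          ← Finset.mul_sum, ← Finset.mul_sum]
        have e1 : a * ((r + 1 : ℤ) : ℝ) ≤ a * ∑ i, W i * u i :=
          mul_le_mul_of_nonneg_left hu.2 ha
        have e2 : b * ((r + 1 : ℤ) : ℝ) ≤ b * ∑ i, W i * v i :=
          mul_le_mul_of_nonneg_left hv.2 hb
        have e3 : a * ((r + 1 : ℤ) : ℝ) + b * ((r + 1 : ℤ) : ℝ) = ((r + 1 : ℤ) : ℝ) := by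
          rw [← add_mul, hab, one_mul]
        linarith
  · -- relaxation ⊆ convex hull
    intro x hx
    classical
    refine key' W hW (r + 1) n x hx.1 hx.2 ?_
    calc (Finset.univ.filter (fun j => x j ≠ 0 ∧ x j ≠ 1)).card
        ≤ (Finset.univ : Finset (Fin n)).card := Finset.card_filter_le _ _
      _ = n := by simp
end

section
/- Closed form for the first-layer fixing subproblem under the ℓ₁ norm: the maximum of c·Σ_{j=1}^n W_j x_j over all x ∈ X⁰ = {x ∈ (1/q)ℤ₊^n ∩ [0,1]^n : ‖x − x̄‖₁ ≤ ε} equals min( Σ_{j=1}^n max(c·W_j, 0), (1/q)⌊qε⌋ + c·Σ_{j=1}^n W_j x̄_j ), and this maximum is attained. -/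
/-!
Put `a j = c * W j ∈ {-1, 0, 1}`. For feasible `x` the objective `∑ a j x j` is at most
`∑ max (a j) 0` because `x ∈ [0,1]ⁿ`, and at most `∑ a j x̄ j + ‖x - x̄‖₁` because `|a j| ≤ 1`;
since `x` and `x̄` lie on the grid `(1/q)ℤⁿ`, their `ℓ₁` distance is a multiple of `1/q`, hence at
most `⌊qε⌋/q`. Conversely, coordinate `j` can move from `x̄ j` in the direction `a j` by
`r j / q` grid steps, where `r j / q = max (a j) 0 - a j x̄ j`, each step gaining `1/q`. Spreading
`min(⌊qε⌋, ∑ r j)` steps over the coordinates within these capacities attains the bound.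
-/

open Finset

variable {ι : Type*}

theorem Finset.exists_le_sum_eq_of_le_sum [DecidableEq ι] (s : Finset ι) (c : ι → ℕ) {k : ℕ}
    (hk : k ≤ ∑ i ∈ s, c i) : ∃ d : ι → ℕ, (∀ i, d i ≤ c i) ∧ ∑ i ∈ s, d i = k := by
  induction s using Finset.induction_on generalizing k with
  | empty => exact ⟨0, fun _ => Nat.zero_le _, by simp_all⟩
  | insert j s hj ih =>
    rw [sum_insert hj] at hk
    obtain ⟨d, hdc, hds⟩ := ih (k := k - min k (c j)) (by omega)
    refine ⟨Function.update d j (min k (c j)), fun i => ?_, ?_⟩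
    · rcases eq_or_ne i j with rfl | hi
      · simp
      · simpa [hi] using hdc i
    · rw [sum_insert hj, sum_update_of_notMem hj, Function.update_self, hds]
      omega

theorem exists_grid_step {q m : ℕ} (hq : 0 < q) (hm : m ≤ q) {a : ℝ}
    (ha : a = -1 ∨ a = 0 ∨ a = 1) :
    ∃ r : ℕ, (r : ℝ) / q = max a 0 - a * (m / q) ∧
      ∀ d ≤ r, ∃ m' : ℕ, m' ≤ q ∧ (m' : ℝ) / q = m / q + a * (d / q) ∧
        a * (m' / q) = a * (m / q) + d / q := by
  have hq' : (q : ℝ) ≠ 0 := by positivity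
  rcases ha with rfl | rfl | rfl
  · refine ⟨m, by simp, fun d hd => ⟨m - d, by omega, ?_, ?_⟩⟩ <;>
      rw [Nat.cast_sub hd] <;> ring
  · refine ⟨0, by simp, fun d hd => ?_⟩
    obtain rfl : d = 0 := by omega
    exact ⟨m, hm, by simp, by simp⟩
  · refine ⟨q - m, ?_, fun d hd => ⟨m + d, by omega, by push_cast; ring, by push_cast; ring⟩⟩
    rw [Nat.cast_sub hm]
    field_simp
    simp

variable [Fintype ι]

theorem sum_mul_le_sum_max_zero {a x : ι → ℝ} (hx : ∀ j, 0 ≤ x j ∧ x j ≤ 1) :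
    ∑ j, a j * x j ≤ ∑ j, max (a j) 0 :=
  sum_le_sum fun j _ => (mul_le_mul_of_nonneg_right (le_max_left _ _) (hx j).1).trans
    (mul_le_of_le_one_right (le_max_right _ _) (hx j).2)

theorem sum_mul_sub_sum_mul_le_sum_abs_sub {a x y : ι → ℝ} (ha : ∀ j, |a j| ≤ 1) :
    ∑ j, a j * x j - ∑ j, a j * y j ≤ ∑ j, |x j - y j| := by
  rw [← sum_sub_distrib]
  refine sum_le_sum fun j _ => ?_
  calc a j * x j - a j * y j = a j * (x j - y j) := by ring
    _ ≤ |a j| * |x j - y j| := by rw [← abs_mul]; exact le_abs_self _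
    _ ≤ |x j - y j| := mul_le_of_le_one_left (abs_nonneg _) (ha j)

theorem exists_sum_abs_sub_eq_natCast_div {q : ℕ} {x y : ι → ℝ}
    (hx : ∀ j, ∃ m : ℕ, x j = m / q) (hy : ∀ j, ∃ m : ℕ, y j = m / q) :
    ∃ N : ℕ, ∑ j, |x j - y j| = N / q := by
  have hterm : ∀ j, ∃ N : ℕ, |x j - y j| = N / q := fun j => by
    obtain ⟨m, hm⟩ := hx j
    obtain ⟨m', hm'⟩ := hy j
    refine ⟨((m : ℤ) - m').natAbs, ?_⟩
    rw [hm, hm', ← sub_div, abs_div, Nat.abs_cast, Nat.cast_natAbs]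
    push_cast
    rfl
  choose N hN using hterm
  exact ⟨∑ j, N j, by push_cast; rw [sum_div]; exact sum_congr rfl fun j _ => hN j⟩

theorem natCast_div_le_floor_div {q N : ℕ} (hq : 0 < q) {ε : ℝ} (h : (N : ℝ) / q ≤ ε) :
    (N : ℝ) / q ≤ ⌊q * ε⌋₊ / q := by
  have hq' : (0 : ℝ) < q := by exact_mod_cast hq
  rw [div_le_iff₀ hq', mul_comm] at h
  exact div_le_div_of_nonneg_right (Nat.cast_le.2 (Nat.le_floor h)) hq'.le

theorem exists_grid_point_sum_mul_eq_min [DecidableEq ι] {q : ℕ} (hq : 0 < q) (B : ℕ)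
    {a xbar : ι → ℝ}
    (ha : ∀ j, a j = -1 ∨ a j = 0 ∨ a j = 1)
    (hgrid : ∀ j, ∃ m : ℕ, xbar j = m / q) (hle : ∀ j, xbar j ≤ 1) :
    ∃ x : ι → ℝ, ((∀ j, ∃ m : ℕ, x j = m / q) ∧ (∀ j, 0 ≤ x j ∧ x j ≤ 1) ∧
        ∑ j, |x j - xbar j| ≤ B / q) ∧
      ∑ j, a j * x j = min (∑ j, max (a j) 0) (B / q + ∑ j, a j * xbar j) := by
  have hq' : (0 : ℝ) < q := by exact_mod_cast hq
  choose m hm using hgrid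
  have hmq : ∀ j, m j ≤ q := fun j => by
    have := hle j
    rw [hm j, div_le_one hq'] at this
    exact_mod_cast this
  choose r hr hstep using fun j => exists_grid_step hq (hmq j) (ha j)
  obtain ⟨d, hdr, hdsum⟩ := exists_le_sum_eq_of_le_sum univ r (min_le_right B (∑ j, r j))
  choose m' hm'q hm' hgain using fun j => hstep j (d j) (hdr j)
  have hsteps :
      ∑ j, (d j : ℝ) / q = min ((B : ℝ) / q) (∑ j, max (a j) 0 - ∑ j, a j * xbar j) := by
    rw [← sum_div, ← Nat.cast_sum, hdsum, Nat.cast_min, ← min_div_div_right hq'.le,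
      Nat.cast_sum, sum_div, ← sum_sub_distrib]
    simp_rw [hr, hm]
  refine ⟨fun j => m' j / q, ⟨fun j => ⟨m' j, rfl⟩,
    fun j => ⟨by positivity, (div_le_one hq').2 (by exact_mod_cast hm'q j)⟩, ?_⟩, ?_⟩
  · calc ∑ j, |m' j / q - xbar j| = ∑ j, |a j| * (d j / q) := sum_congr rfl fun j _ => by
          rw [hm', hm, add_sub_cancel_left, abs_mul, abs_div, Nat.abs_cast, Nat.abs_cast]
      _ ≤ ∑ j, (d j : ℝ) / q := sum_le_sum fun j _ =>
          mul_le_of_le_one_left (by positivity) (by rcases ha j with h | h | h <;> simp [h])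
      _ ≤ B / q := by rw [hsteps]; exact min_le_left _ _
  · calc ∑ j, a j * (m' j / q) = ∑ j, a j * xbar j + ∑ j, (d j : ℝ) / q := by
          rw [← sum_add_distrib]
          exact sum_congr rfl fun j _ => by rw [hgain, hm]
      _ = min (∑ j, max (a j) 0) (B / q + ∑ j, a j * xbar j) := by
          rw [hsteps, min_comm, ← min_add_add_left]
          ring_nf

/-- Closed form for the first-layer fixing subproblem under the ℓ₁ norm: the maximum of
`c·∑ W j x j` over `X⁰ = {x ∈ (1/q)ℤ₊^n ∩ [0,1]^n : ‖x - x̄‖₁ ≤ ε}` is attained and equals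
`min(∑ j max(c·W j, 0), (1/q)⌊qε⌋ + c·∑ W j x̄ j)`. -/
theorem stmt_11 (n : ℕ) (q : ℕ) (hq : 1 ≤ q)
    (xbar : Fin n → ℝ)
    (hxbar1 : ∀ j, ∃ m : ℕ, xbar j = (m : ℝ) / (q : ℝ))
    (hxbar2 : ∀ j, 0 ≤ xbar j ∧ xbar j ≤ 1)
    (ε : ℝ) (hε : 0 ≤ ε)
    (W : Fin n → ℝ) (hW : ∀ j, W j = -1 ∨ W j = 0 ∨ W j = 1)
    (c : ℝ) (hc : c = -1 ∨ c = 1) :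
    IsGreatest
      {v : ℝ | ∃ x : Fin n → ℝ,
        ((∀ j, ∃ m : ℕ, x j = (m : ℝ) / (q : ℝ)) ∧ (∀ j, 0 ≤ x j ∧ x j ≤ 1) ∧
          (∑ j, |x j - xbar j|) ≤ ε) ∧
        v = c * ∑ j, W j * x j}
      (min (∑ j, max (c * W j) 0)
        ((1 / (q : ℝ)) * (⌊(q : ℝ) * ε⌋ : ℝ) + c * ∑ j, W j * xbar j)) := by
  have ha : ∀ j, c * W j = -1 ∨ c * W j = 0 ∨ c * W j = 1 := fun j => by
    rcases hc with rfl | rfl <;> rcases hW j with h | h | h <;> norm_num [h]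
  have hobj : ∀ x : Fin n → ℝ, c * ∑ j, W j * x j = ∑ j, c * W j * x j := fun x => by
    simp_rw [mul_sum, mul_assoc]
  have hfloor : 1 / (q : ℝ) * ⌊q * ε⌋ = ⌊q * ε⌋₊ / q := by
    rw [← natCast_floor_eq_intCast_floor (by positivity)]
    ring
  simp_rw [hobj, hfloor]
  constructor
  · obtain ⟨x, ⟨hgrid, hbox, hdist⟩, hval⟩ :=
      exists_grid_point_sum_mul_eq_min hq ⌊q * ε⌋₊ ha hxbar1 fun j => (hxbar2 j).2
    refine ⟨x, ⟨hgrid, hbox, hdist.trans ?_⟩, by rw [hval, add_comm]⟩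
    rw [div_le_iff₀ (by positivity), mul_comm]
    exact Nat.floor_le (by positivity)
  · rintro _ ⟨x, ⟨hgrid, hbox, hdist⟩, rfl⟩
    obtain ⟨N, hN⟩ := exists_sum_abs_sub_eq_natCast_div hgrid hxbar1
    have hlin := sum_mul_sub_sum_mul_le_sum_abs_sub (a := fun j => c * W j) (x := x) (y := xbar)
      fun j => by rcases ha j with h | h | h <;> simp [h]
    rw [hN] at hdist hlin
    refine le_min (sum_mul_le_sum_max_zero hbox) ?_
    linarith [natCast_div_le_floor_div hq hdist]
end

section
/- Closed form for the first-layer fixing subproblem under the ℓ∞ norm: the maximum of c·Σ_{j=1}^n W_j x_j over all x ∈ X⁰_∞ = {x ∈ (1/q)ℤ₊^n ∩ [0,1]^n : ‖x − x̄‖_∞ ≤ ε} equals Σ_{j : c·W_j = 1} min(x̄_j + (1/q)⌊qε⌋, 1) − Σ_{j : c·W_j = −1} max(x̄_j − (1/q)⌊qε⌋, 0) + Σ_{j : W_j = 0} 0, and it is attained by the vector x* with x*_j = min(x̄_j + (1/q)⌊qε⌋, 1) when c·W_j = 1, x*_j = max(x̄_j − (1/q)⌊qε⌋, 0) when c·W_j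 = −1, and x*_j = x̄_j when W_j = 0. -/
/-- Closed form for the first-layer fixing subproblem under the ℓ∞ norm: the maximum of
`c·∑ W j x j` over `X⁰_∞ = {x ∈ (1/q)ℤ₊^n ∩ [0,1]^n : ‖x - x̄‖_∞ ≤ ε}` equals
`∑_{j : c W j = 1} min(x̄ j + (1/q)⌊qε⌋, 1) - ∑_{j : c W j = -1} max(x̄ j - (1/q)⌊qε⌋, 0)
 + ∑_{j : W j = 0} 0`, attained by the vector `x*` described in the statement. -/
theorem stmt_13 (n : ℕ) (q : ℕ) (hq : 1 ≤ q)
    (xbar : Fin n → ℝ)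
    (hxbar1 : ∀ j, ∃ m : ℕ, xbar j = (m : ℝ) / (q : ℝ))
    (hxbar2 : ∀ j, 0 ≤ xbar j ∧ xbar j ≤ 1)
    (ε : ℝ) (hε : 0 ≤ ε)
    (W : Fin n → ℝ) (hW : ∀ j, W j = -1 ∨ W j = 0 ∨ W j = 1)
    (c : ℝ) (hc : c = -1 ∨ c = 1)
    (xstar : Fin n → ℝ)
    (hxstar : ∀ j, xstar j =
      if c * W j = 1 then min (xbar j + (1 / (q : ℝ)) * (⌊(q : ℝ) * ε⌋ : ℝ)) 1
      else if c * W j = -1 then max (xbar j - (1 / (q : ℝ)) * (⌊(q : ℝ) * ε⌋ : ℝ)) 0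
      else xbar j) :
    ((∀ j, ∃ m : ℕ, xstar j = (m : ℝ) / (q : ℝ)) ∧ (∀ j, 0 ≤ xstar j ∧ xstar j ≤ 1) ∧
        (∀ j, |xstar j - xbar j| ≤ ε)) ∧
      c * ∑ j, W j * xstar j =
        (∑ j ∈ Finset.univ.filter (fun j => c * W j = 1),
            min (xbar j + (1 / (q : ℝ)) * (⌊(q : ℝ) * ε⌋ : ℝ)) 1) -
          (∑ j ∈ Finset.univ.filter (fun j => c * W j = -1),
            max (xbar j - (1 / (q : ℝ)) * (⌊(q : ℝ) * ε⌋ : ℝ)) 0) +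
          (∑ _j ∈ Finset.univ.filter (fun j => W j = 0), (0 : ℝ)) ∧
      ∀ x : Fin n → ℝ,
        (∀ j, ∃ m : ℕ, x j = (m : ℝ) / (q : ℝ)) → (∀ j, 0 ≤ x j ∧ x j ≤ 1) →
          (∀ j, |x j - xbar j| ≤ ε) →
            c * ∑ j, W j * x j ≤ c * ∑ j, W j * xstar j := by
  have hq0 : (0:ℝ) < q := by exact_mod_cast Nat.pos_of_ne_zero (by omega)
  set δ : ℝ := (1 / (q : ℝ)) * (⌊(q : ℝ) * ε⌋ : ℝ) with hδdef
  have hfl0 : (0:ℤ) ≤ ⌊(q : ℝ) * ε⌋ := Int.floor_nonneg.2 (by positivity)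
  set k : ℕ := (⌊(q : ℝ) * ε⌋).toNat with hkdef
  have hkcast : ((k:ℝ)) = (⌊(q : ℝ) * ε⌋ : ℝ) := by
    rw [hkdef]; exact_mod_cast Int.toNat_of_nonneg hfl0
  have hδk : δ = (k:ℝ) / q := by rw [hδdef, ← hkcast]; ring
  have hδ0 : 0 ≤ δ := by rw [hδk]; positivity
  have hδε : δ ≤ ε := by
    rw [hδdef, div_mul_eq_mul_div, one_mul, div_le_iff₀ hq0]
    calc (⌊(q : ℝ) * ε⌋ : ℝ) ≤ (q:ℝ) * ε := Int.floor_le _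
      _ = ε * q := by ring
  have key : ∀ a b : ℕ, (a:ℝ)/q - (b:ℝ)/q ≤ ε → (a:ℝ)/q - (b:ℝ)/q ≤ δ := by
    intro a b h
    have h1 : (a:ℝ) - b ≤ (q:ℝ) * ε := by
      have := mul_le_mul_of_nonneg_left h (le_of_lt hq0)
      rw [mul_sub, mul_div_cancel₀ _ (ne_of_gt hq0), mul_div_cancel₀ _ (ne_of_gt hq0)] at this
      linarith
    have h2 : (a:ℤ) - b ≤ ⌊(q : ℝ) * ε⌋ := Int.le_floor.2 (by push_cast; linarith)
    have h3 : (a:ℝ) - b ≤ (⌊(q : ℝ) * ε⌋ : ℝ) := by exact_mod_cast h2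
    rw [div_sub_div_same, hδdef, div_mul_eq_mul_div, one_mul]
    exact (div_le_div_iff_of_pos_right hq0).2 h3
  -- per coordinate facts about xstar
  have hmult : ∀ j, ∃ m : ℕ, xstar j = (m : ℝ) / (q : ℝ) := by
    intro j
    obtain ⟨m, hm⟩ := hxbar1 j
    rw [hxstar j]
    split_ifs with h1 h2
    · rcases le_total (xbar j + δ) 1 with hle | hle
      · exact ⟨m + k, by rw [min_eq_left hle, hm, hδk]; push_cast; ring⟩
      · exact ⟨q, by rw [min_eq_right hle, div_self (ne_of_gt hq0)]⟩
    · rcases le_total (xbar j - δ) 0 with hle | hle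
      · exact ⟨0, by rw [max_eq_right hle]; simp⟩
      · have hkm : k ≤ m := by
          have h' : (k:ℝ)/q ≤ (m:ℝ)/q := by rw [← hδk, ← hm]; linarith
          have h'' : (k:ℝ) ≤ (m:ℝ) := (div_le_div_iff_of_pos_right hq0).1 h'
          exact_mod_cast h''
        exact ⟨m - k, by rw [max_eq_left hle, hm, hδk, Nat.cast_sub hkm]; ring⟩
    · exact ⟨m, hm⟩
  have hbd : ∀ j, 0 ≤ xstar j ∧ xstar j ≤ 1 := by
    intro j
    obtain ⟨h0, h1'⟩ := hxbar2 j
    rw [hxstar j]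
    split_ifs with h1 h2
    · constructor
      · exact le_min (by linarith) zero_le_one
      · exact min_le_right _ _
    · constructor
      · exact le_max_right _ _
      · exact max_le (by linarith) zero_le_one
    · exact ⟨h0, h1'⟩
  have hclose : ∀ j, |xstar j - xbar j| ≤ ε := by
    intro j
    obtain ⟨h0, h1'⟩ := hxbar2 j
    rw [hxstar j, abs_le]
    split_ifs with h1 h2
    · constructor
      · have : xbar j ≤ min (xbar j + δ) 1 := le_min (by linarith) h1'
        linarith
      · have : min (xbar j + δ) 1 ≤ xbar j + δ := min_le_left _ _
        linarith
    · constructor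
      · have : xbar j - δ ≤ max (xbar j - δ) 0 := le_max_left _ _
        linarith
      · have : max (xbar j - δ) 0 ≤ xbar j := max_le (by linarith) h0
        linarith
    · simp [hε]
  refine ⟨⟨hmult, hbd, hclose⟩, ?_, ?_⟩
  · -- sum formula
    have hptw : ∀ j, c * (W j * xstar j) =
        (if c * W j = 1 then min (xbar j + δ) 1
         else if c * W j = -1 then -(max (xbar j - δ) 0) else 0) := by
      intro j
      rw [hxstar j]
      rcases hW j with hw | hw | hw <;> rcases hc with hcv | hcv <;>
        norm_num [hw, hcv]
    rw [Finset.mul_sum]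
    simp only [hptw]
    rw [Finset.sum_ite, Finset.sum_ite]
    have hfe : (Finset.univ.filter (fun j => ¬ c * W j = 1)).filter
        (fun j => c * W j = -1) = Finset.univ.filter (fun j => c * W j = -1) := by
      rw [Finset.filter_filter]
      apply Finset.filter_congr
      intro j _
      constructor
      · exact fun h => h.2
      · intro h; exact ⟨by rw [h]; norm_num, h⟩
    rw [hfe]
    simp [sub_eq_add_neg, Finset.sum_neg_distrib]
  · -- optimality
    intro x hx1 hx2 hx3
    rw [Finset.mul_sum, Finset.mul_sum]
    apply Finset.sum_le_sum
    intro j _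
    obtain ⟨m, hm⟩ := hxbar1 j
    obtain ⟨a, ha⟩ := hx1 j
    have hxj := hx3 j
    rw [abs_le] at hxj
    rcases hW j with hw | hw | hw <;> rcases hc with hcv | hcv
    all_goals simp only [hw, hcv]
    · -- W = -1, c = -1 : c*W = 1, need x j ≤ xstar j
      have hcw : c * W j = 1 := by rw [hw, hcv]; norm_num
      have hub : x j ≤ min (xbar j + δ) 1 := by
        refine le_min ?_ (hx2 j).2
        have := key a m (by rw [← ha, ← hm]; linarith)
        rw [← ha, ← hm] at this; linarith
      rw [hxstar j, if_pos hcw]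
      nlinarith [hub]
    · -- W = -1, c = 1 : c*W = -1, need x j ≥ xstar j ... sign: c*W*x = -x
      have hcw : c * W j = -1 := by rw [hw, hcv]; norm_num
      have hcw1 : ¬ c * W j = 1 := by rw [hcw]; norm_num
      have hlb : max (xbar j - δ) 0 ≤ x j := by
        refine max_le ?_ (hx2 j).1
        have := key m a (by rw [← ha, ← hm]; linarith)
        rw [← ha, ← hm] at this; linarith
      rw [hxstar j, if_neg hcw1, if_pos hcw]
      nlinarith [hlb]
    · simp
    · simp
    · -- W = 1, c = -1 : c*W = -1
      have hcw : c * W j = -1 := by rw [hw, hcv]; norm_num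
      have hcw1 : ¬ c * W j = 1 := by rw [hcw]; norm_num
      have hlb : max (xbar j - δ) 0 ≤ x j := by
        refine max_le ?_ (hx2 j).1
        have := key m a (by rw [← ha, ← hm]; linarith)
        rw [← ha, ← hm] at this; linarith
      rw [hxstar j, if_neg hcw1, if_pos hcw]
      nlinarith [hlb]
    · -- W = 1, c = 1
      have hcw : c * W j = 1 := by rw [hw, hcv]; norm_num
      have hub : x j ≤ min (xbar j + δ) 1 := by
        refine le_min ?_ (hx2 j).2
        have := key a m (by rw [← ha, ← hm]; linarith)
        rw [← ha, ← hm] at this; linarith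
      rw [hxstar j, if_pos hcw]
      nlinarith [hub]
end
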